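/- arXiv:2010.04392 — 2 statements merged into one kernel-verified Lean document; each statement's English description precedes it below -/
import Mathlib

section
/- Let 2 ≤ q ≤ n, let N be a normal subgroup of S_q, let α, β ∈ D_q be H-related in P_n, and let γ ∈ P_n. Then: (1) αγ ∈ D_q if and only if βγ ∈ D_q, and in that case (α,β) ∈ ν_N if and only if (αγ,βγ) ∈ ν_N; (2) γα ∈ D_q if and only if γβ ∈ D_q, and in that case (α,β) ∈ ν_N if and only if (γα,γβ) ∈ ν_N. -/
namespace TPM

/-- Vertex set `{1,…,n} ∪ {1',…,n'}`: `Sum.inl` = unprimed (upper row),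
`Sum.inr` = primed (lower row). -/
abbrev V (n : ℕ) := Fin n ⊕ Fin n

/-- The partition monoid `P_n`: set partitions of the `2n`-element set `V n`,
encoded as equivalence relations (setoids). -/
abbrev PM (n : ℕ) := Setoid (V n)

/-- Three-row vertex set of the product graph: top / middle / bottom. -/
abbrev W (n : ℕ) := Fin n ⊕ (Fin n ⊕ Fin n)

variable {n : ℕ}

/-- First factor: unprimed ↦ top, primed ↦ middle. -/
def topMid : V n → W n
  | Sum.inl i => Sum.inl i
  | Sum.inr i => Sum.inr (Sum.inl i)

/-- Second factor: unprimed ↦ middle, primed ↦ bottom. -/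
def midBot : V n → W n
  | Sum.inl i => Sum.inr (Sum.inl i)
  | Sum.inr i => Sum.inr (Sum.inr i)

/-- Embedding of `V n` as top and bottom rows of the three-row set. -/
def topBot : V n → W n
  | Sum.inl i => Sum.inl i
  | Sum.inr i => Sum.inr (Sum.inr i)

/-- Edge relation of the product graph `Γ(α,β)`. -/
def graphRel (α β : PM n) (x y : W n) : Prop :=
  (∃ u v : V n, α.r u v ∧ x = topMid u ∧ y = topMid v) ∨
  (∃ u v : V n, β.r u v ∧ x = midBot u ∧ y = midBot v)

/-- Connectivity (equivalence closure of the edge relation) in `Γ(α,β)`. -/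
def conn (α β : PM n) : W n → W n → Prop := Relation.EqvGen (graphRel α β)

/-- Connectivity in `Γ(α,β)`, as a setoid on the three-row vertex set. -/
def connSetoid (α β : PM n) : Setoid (W n) :=
  ⟨conn α β, Relation.EqvGen.is_equivalence _⟩

/-- The product of two partitions: `x,y` lie in the same block of `αβ` iff they are
connected in `Γ(α,β)`. -/
def pmul (α β : PM n) : PM n :=
  ⟨fun x y => conn α β (topBot x) (topBot y),
    ⟨fun _ => Relation.EqvGen.refl _, fun h => Relation.EqvGen.symm _ _ h, fun h h' => Relation.EqvGen.trans _ _ _ h h'⟩⟩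

/-- A vertex of the three-row set lies in the middle row. -/
def isMid (x : W n) : Prop := ∃ i : Fin n, x = Sum.inr (Sum.inl i)

/-- `Φ(α,β)`: the number of floating components of `Γ(α,β)`, i.e. connected components
all of whose vertices lie in the middle row. -/
noncomputable def Phi (α β : PM n) : ℕ :=
  Nat.card {c : Quotient (connSetoid α β) //
    ∀ x : W n, Quotient.mk (connSetoid α β) x = c → isMid x}

/-- The rank of a partition: the number of transversal blocks (blocks containing both an
unprimed and a primed element). -/
noncomputable def rnk (α : PM n) : ℕ :=
  Nat.card {c : Quotient α //
    (∃ i : Fin n, Quotient.mk α (Sum.inl i) = c) ∧ ∃ i : Fin n, Quotient.mk α (Sum.inr i) = c}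

/-- Which row of `V n` a point lies in. -/
def side : V n → Bool
  | Sum.inl _ => true
  | Sum.inr _ => false

/-- `α̂`: split each transversal of `α` into its unprimed part and its primed part. -/
def hat (α : PM n) : PM n :=
  ⟨fun x y => α.r x y ∧ side x = side y,
    ⟨fun x => ⟨α.iseqv.refl x, rfl⟩,
     fun h => ⟨α.iseqv.symm h.1, h.2.symm⟩,
     fun h h' => ⟨α.iseqv.trans h.1 h'.1, h.2.trans h'.2⟩⟩⟩

/-- The twisted product on `ℕ × P_n`:  `(i,α)(j,β) = (i + j + Φ(α,β), αβ)`. -/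
noncomputable def tmul (a b : ℕ × PM n) : ℕ × PM n :=
  (a.1 + b.1 + Phi a.2 b.2, pmul a.2 b.2)

/-- A congruence on a set equipped with a binary operation: an equivalence relation
compatible with the operation on both sides. -/
def IsCongruence {M : Type*} (mul : M → M → M) (σ : M → M → Prop) : Prop :=
  Equivalence σ ∧ ∀ x y a, σ x y → σ (mul a x) (mul a y) ∧ σ (mul x a) (mul y a)

/-- Green's relation `R`: equality of the right ideals `xM = yM`. -/
def greenR {M : Type*} (mul : M → M → M) (x y : M) : Prop :=
  Set.range (mul x) = Set.range (mul y)

/-- Green's relation `L`: `Mx = My`. -/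
def greenL {M : Type*} (mul : M → M → M) (x y : M) : Prop :=
  Set.range (fun a => mul a x) = Set.range (fun a => mul a y)

/-- The principal two-sided ideal `MxM`. -/
def jSet {M : Type*} (mul : M → M → M) (x : M) : Set M :=
  Set.range (fun p : M × M => mul (mul p.1 x) p.2)

/-- Green's relation `J`: `MxM = MyM`. -/
def greenJ {M : Type*} (mul : M → M → M) (x y : M) : Prop :=
  jSet mul x = jSet mul y

/-- Green's relation `H = R ∩ L`. -/
def greenH {M : Type*} (mul : M → M → M) (x y : M) : Prop :=
  greenR mul x y ∧ greenL mul x y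

/-- Green's relation `D = R ∘ L`. -/
def greenD {M : Type*} (mul : M → M → M) (x y : M) : Prop :=
  ∃ z, greenR mul x z ∧ greenL mul z y

/-- `pd(α,β)` satisfies `P`, where `α` has `p` transversals: there are representatives
`a s` of the upper parts of the `p` (pairwise distinct) transversals of `α`, with `b s`
representing the corresponding lower parts, and a permutation `π` with `P π` such that the
block of `β` containing `a s` contains `b (π s)`.  (For H-related `α, β ∈ D_p` this says
exactly that some representation of the permutational difference `pd(α,β)` satisfies `P`.) -/
def pdIn (p : ℕ) (P : Equiv.Perm (Fin p) → Prop) (α β : PM n) : Prop :=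
  ∃ (a b : Fin p → Fin n) (π : Equiv.Perm (Fin p)),
    (∀ s t, α.r (Sum.inl (a s)) (Sum.inl (a t)) → s = t) ∧
    (∀ s, α.r (Sum.inl (a s)) (Sum.inr (b s))) ∧
    (∀ s, β.r (Sum.inl (a s)) (Sum.inr (b (π s)))) ∧
    P π

/-- The relation `ν_N` on `D_p`, for a subgroup `N ≤ S_p`:  H-related pairs of rank-`p`
partitions whose permutational difference lies in `N`. -/
def nuRel (p : ℕ) (N : Subgroup (Equiv.Perm (Fin p))) (α β : PM n) : Prop :=
  rnk α = p ∧ rnk β = p ∧ greenH pmul α β ∧ pdIn p (· ∈ N) α β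

/-- The congruence `(m, m+d)^♯` on the additive monoid `ℕ` (intended for `d ≥ 1`). -/
def natCong (m d : ℕ) (i j : ℕ) : Prop :=
  i = j ∨ (m ≤ i ∧ m ≤ j ∧ i % d = j % d)

/-- `min θ ≤ i` for a congruence `θ` on `ℕ` (with `min Δ_ℕ = ∞`). -/
def minLE (θ : ℕ → ℕ → Prop) (i : ℕ) : Prop :=
  ∃ a b, θ a b ∧ a ≠ b ∧ a ≤ i

/-- `k ≤ min θ` for a congruence `θ` on `ℕ` (with `min Δ_ℕ = ∞`). -/
def leMin (k : ℕ) (θ : ℕ → ℕ → Prop) : Prop :=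
  ∀ a b, θ a b → a ≠ b → k ≤ a

/-- The possible entries of a C-matrix. -/
inductive CEntry : Type
  | delta | muUp | muDown | mu | lam | rho | R
  | nsym (q : ℕ) (N : Subgroup (Equiv.Perm (Fin q)))

/-- Whether a C-matrix entry is an N-symbol. -/
def isNsym : CEntry → Prop
  | CEntry.nsym _ _ => True
  | _ => False

/-- The allowed values of the symbol `ζ` in row types RT2, RT5, RT6. -/
def isZeta (e : CEntry) : Prop :=
  e = CEntry.mu ∨ e = CEntry.muUp ∨ e = CEntry.muDown ∨ e = CEntry.delta

/-- The allowed values of the symbol `ξ` in row types RT4–RT7: any of `μ,ρ,λ,R` if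
`d = 1`, and only `μ` if `d > 1`. -/
def xiOK (d : ℕ) (e : CEntry) : Prop :=
  e = CEntry.mu ∨ (d = 1 ∧ (e = CEntry.rho ∨ e = CEntry.lam ∨ e = CEntry.R))

/-- Row type RT1 for rows 0 and 1: all entries `Δ`. -/
def RT1 (M0 M1 : ℕ → CEntry) : Prop :=
  (∀ i, M0 i = CEntry.delta) ∧ (∀ i, M1 i = CEntry.delta)

/-- Row type RT2. -/
def RT2 (Θ0 Θ1 : ℕ → ℕ → Prop) (M0 M1 : ℕ → CEntry) : Prop :=
  Θ0 = Eq ∧ Θ1 = Eq ∧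
  ∃ i ζ, isZeta ζ ∧
    (∀ j, j < i → M0 j = CEntry.delta) ∧ (∀ j, i ≤ j → M0 j = CEntry.mu) ∧
    (∀ j, j < i → M1 j = CEntry.delta) ∧ M1 i = ζ ∧ (∀ j, i < j → M1 j = CEntry.mu)

/-- Row type RT3. -/
def RT3 (Θ0 : ℕ → ℕ → Prop) (M0 M1 : ℕ → CEntry) : Prop :=
  ∃ m ξ, Θ0 = natCong m 1 ∧ (ξ = CEntry.rho ∨ ξ = CEntry.lam ∨ ξ = CEntry.R) ∧
    (∀ i, M1 i = CEntry.delta) ∧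
    (∀ j, j < m → M0 j = CEntry.delta) ∧ (∀ j, m ≤ j → M0 j = ξ)

/-- Row type RT4. -/
def RT4 (Θ0 Θ1 : ℕ → ℕ → Prop) (M0 M1 : ℕ → CEntry) : Prop :=
  ∃ m d ξ, 1 ≤ d ∧ Θ0 = natCong m d ∧ Θ1 = natCong m d ∧ xiOK d ξ ∧
    (∀ j, j < m → M0 j = CEntry.delta ∧ M1 j = CEntry.delta) ∧
    (∀ j, m ≤ j → M0 j = ξ ∧ M1 j = ξ)

/-- Row type RT5. -/
def RT5 (Θ0 Θ1 : ℕ → ℕ → Prop) (M0 M1 : ℕ → CEntry) : Prop :=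
  ∃ m d i ξ ζ, 1 ≤ d ∧ i < m ∧ Θ0 = natCong m d ∧ Θ1 = natCong (m + 1) d ∧
    xiOK d ξ ∧ isZeta ζ ∧
    (∀ j, j < i → M0 j = CEntry.delta) ∧ (∀ j, i ≤ j → j < m → M0 j = CEntry.mu) ∧
    (∀ j, m ≤ j → M0 j = ξ) ∧
    (∀ j, j < i → M1 j = CEntry.delta) ∧ M1 i = ζ ∧
    (∀ j, i < j → j ≤ m → M1 j = CEntry.mu) ∧ (∀ j, m < j → M1 j = ξ)

/-- Row type RT6. -/
def RT6 (Θ0 Θ1 : ℕ → ℕ → Prop) (M0 M1 : ℕ → CEntry) : Prop :=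
  ∃ m l d ξ ζ, 1 ≤ d ∧ m < l ∧ Θ0 = natCong m d ∧ Θ1 = natCong l d ∧
    xiOK d ξ ∧ isZeta ζ ∧
    (∀ j, j < m → M0 j = CEntry.delta) ∧ (∀ j, m ≤ j → M0 j = ξ) ∧
    (∀ j, j < l - 1 → M1 j = CEntry.delta) ∧ M1 (l - 1) = ζ ∧ (∀ j, l ≤ j → M1 j = ξ)

/-- Row type RT7. -/
def RT7 (Θ0 Θ1 : ℕ → ℕ → Prop) (M0 M1 : ℕ → CEntry) : Prop :=
  ∃ m l d ξ, 1 ≤ d ∧ 0 < m ∧ m + 1 < l ∧ (l - 1) % d = m % d ∧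
    Θ0 = natCong m d ∧ Θ1 = natCong l d ∧ xiOK d ξ ∧
    (∀ j, j < m - 1 → M0 j = CEntry.delta) ∧ M0 (m - 1) = CEntry.mu ∧
    (∀ j, m ≤ j → M0 j = ξ) ∧
    (∀ j, j < l - 1 → M1 j = CEntry.delta) ∧ M1 (l - 1) = CEntry.mu ∧
    (∀ j, l ≤ j → M1 j = ξ)

/-- Row type RT8 for a row `q ≥ 2`: all entries `Δ`. -/
def RT8 (Mq : ℕ → CEntry) : Prop := ∀ i, Mq i = CEntry.delta

/-- Row type RT9 for a row `q ≥ 2`. -/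
def RT9 (q : ℕ) (Θq : ℕ → ℕ → Prop) (Mq : ℕ → CEntry) : Prop :=
  ∃ (i k : ℕ) (Ns : ℕ → Subgroup (Equiv.Perm (Fin q))),
    i ≤ k ∧ leMin k Θq ∧
    (∀ j, i ≤ j → j ≤ k → Ns j ≠ ⊥ ∧ (Ns j).Normal) ∧
    (∀ j j', i ≤ j → j ≤ j' → j' ≤ k → Ns j ≤ Ns j') ∧
    (∀ j, j < i → Mq j = CEntry.delta) ∧
    (∀ j, i ≤ j → j < k → Mq j = CEntry.nsym q (Ns j)) ∧
    (∀ j, k ≤ j → Mq j = CEntry.nsym q (Ns k))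

/-- Row type RT10 for a row `q ≥ 2`. -/
def RT10 (q : ℕ) (Θq : ℕ → ℕ → Prop) (Mq : ℕ → CEntry) : Prop :=
  ∃ (i m : ℕ) (Ns : ℕ → Subgroup (Equiv.Perm (Fin q))),
    i ≤ m ∧ Θq = natCong m 1 ∧
    (∀ j, i ≤ j → j < m → Ns j ≠ ⊥ ∧ (Ns j).Normal) ∧
    (∀ j j', i ≤ j → j ≤ j' → j' < m → Ns j ≤ Ns j') ∧
    (∀ j, j < i → Mq j = CEntry.delta) ∧
    (∀ j, i ≤ j → j < m → Mq j = CEntry.nsym q (Ns j)) ∧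
    (∀ j, m ≤ j → Mq j = CEntry.R)

/-- A C-pair for `P_n^Φ`: a descending chain `Θ = (θ_0 ⊇ ⋯ ⊇ θ_n)` of congruences on
`(ℕ,+)` together with a matrix `M = (M_{qi})`, `0 ≤ q ≤ n`, `i ∈ ℕ`, whose rows 0 and 1
jointly have one of the types RT1–RT7, whose rows `q ≥ 2` have one of the types RT8–RT10,
and which satisfies the verticality conditions (V1) and (V2). -/
def IsCPair (n : ℕ) (Θ : ℕ → ℕ → ℕ → Prop) (M : ℕ → ℕ → CEntry) : Prop :=
  (∀ q, q ≤ n → IsCongruence (· + ·) (Θ q)) ∧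
  (∀ q r, q ≤ r → r ≤ n → ∀ i j, Θ r i j → Θ q i j) ∧
  (RT1 (M 0) (M 1) ∨ RT2 (Θ 0) (Θ 1) (M 0) (M 1) ∨ RT3 (Θ 0) (M 0) (M 1) ∨
    RT4 (Θ 0) (Θ 1) (M 0) (M 1) ∨ RT5 (Θ 0) (Θ 1) (M 0) (M 1) ∨
    RT6 (Θ 0) (Θ 1) (M 0) (M 1) ∨ RT7 (Θ 0) (Θ 1) (M 0) (M 1)) ∧
  (∀ q, 2 ≤ q → q ≤ n → (RT8 (M q) ∨ RT9 q (Θ q) (M q) ∨ RT10 q (Θ q) (M q))) ∧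
  (∀ q i, 1 ≤ q → q ≤ n → isNsym (M q i) →
    ¬(M (q - 1) i = CEntry.delta ∨ M (q - 1) i = CEntry.muUp ∨
      M (q - 1) i = CEntry.muDown ∨ isNsym (M (q - 1) i))) ∧
  (∀ q i, 2 ≤ q → q ≤ n → M q i = CEntry.R → M (q - 1) i = CEntry.R)

/-- The relation `cg(Θ,M)` on `P_n^Φ` associated with a C-pair `(Θ,M)`: conditions
(C1)–(C8). -/
def cg (n : ℕ) (Θ : ℕ → ℕ → ℕ → Prop) (M : ℕ → ℕ → CEntry)
    (a b : ℕ × PM n) : Prop :=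
  -- (C1)
  (M (rnk a.2) a.1 = CEntry.delta ∧ M (rnk b.2) b.1 = CEntry.delta ∧
    Θ (rnk a.2) a.1 b.1 ∧ a.2 = b.2) ∨
  -- (C2)
  (M (rnk a.2) a.1 = CEntry.R ∧ M (rnk b.2) b.1 = CEntry.R) ∨
  -- (C3)
  (∃ p N, M (rnk a.2) a.1 = CEntry.nsym p N ∧ M (rnk b.2) b.1 = CEntry.nsym p N ∧
    Θ (rnk a.2) a.1 b.1 ∧ rnk a.2 = p ∧ greenH pmul a.2 b.2 ∧ pdIn p (· ∈ N) a.2 b.2) ∨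
  -- (C4)
  (M (rnk a.2) a.1 = CEntry.lam ∧ M (rnk b.2) b.1 = CEntry.lam ∧
    greenL pmul (hat a.2) (hat b.2)) ∨
  -- (C5)
  (M (rnk a.2) a.1 = CEntry.rho ∧ M (rnk b.2) b.1 = CEntry.rho ∧
    greenR pmul (hat a.2) (hat b.2)) ∨
  -- (C6)
  (M (rnk a.2) a.1 = CEntry.muDown ∧ M (rnk b.2) b.1 = CEntry.muDown ∧
    hat a.2 = hat b.2 ∧ greenL pmul a.2 b.2) ∨
  -- (C7)
  (M (rnk a.2) a.1 = CEntry.muUp ∧ M (rnk b.2) b.1 = CEntry.muUp ∧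
    hat a.2 = hat b.2 ∧ greenR pmul a.2 b.2) ∨
  -- (C8)
  (M (rnk a.2) a.1 = CEntry.mu ∧ M (rnk b.2) b.1 = CEntry.mu ∧
    hat a.2 = hat b.2 ∧
    ((rnk a.2 = rnk b.2 ∧ Θ (rnk a.2) a.1 b.1) ∨
     (rnk a.2 ≠ rnk b.2 ∧ Θ 0 (a.1 + rnk b.2) (b.1 + rnk a.2) ∧
        ¬ minLE (Θ (rnk a.2)) a.1 ∧ ¬ minLE (Θ (rnk b.2)) b.1) ∨
     (rnk a.2 ≠ rnk b.2 ∧ Θ 0 (a.1 + rnk b.2) (b.1 + rnk a.2) ∧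
        minLE (Θ (rnk a.2)) a.1 ∧ minLE (Θ (rnk b.2)) b.1)))

/-- The C-pair `(Θ,M)` is exceptional with exceptional row `q`, where
`θ_q = (m, m+2d)^♯`. -/
def ExcAt (n : ℕ) (Θ : ℕ → ℕ → ℕ → Prop) (M : ℕ → ℕ → CEntry) (q m d : ℕ) : Prop :=
  2 ≤ q ∧ q ≤ n ∧ 1 ≤ d ∧ Θ q = natCong m (2 * d) ∧
  ((2 < q ∧ M q m = CEntry.nsym q (alternatingGroup (Fin q))) ∨
   (q = 2 ∧ M 2 m = CEntry.delta ∧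
     (M 1 m = CEntry.mu ∨ M 1 m = CEntry.rho ∨ M 1 m = CEntry.lam ∨ M 1 m = CEntry.R) ∧
     (∀ i j, natCong m d i j → Θ 1 i j)))

/-- The exceptional congruence `cgx(Θ,M)` associated with an exceptional C-pair:
`cg(Θ,M)` together with the pairs of (C9). -/
def cgx (n : ℕ) (Θ : ℕ → ℕ → ℕ → Prop) (M : ℕ → ℕ → CEntry) (q m d : ℕ)
    (a b : ℕ × PM n) : Prop :=
  cg n Θ M a b ∨
  (rnk a.2 = q ∧ rnk b.2 = q ∧ natCong m d a.1 b.1 ∧ ¬ Θ q a.1 b.1 ∧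
    greenH pmul a.2 b.2 ∧ pdIn q (fun π => π ∉ alternatingGroup (Fin q)) a.2 b.2)

/-- The Rees relation of a subset `I`. -/
def rees {M : Type*} (I : Set M) (x y : M) : Prop := x = y ∨ (x ∈ I ∧ y ∈ I)

/-- A (possibly empty) ideal of `P_n^Φ`: `MIM ⊆ I`. -/
def tIdeal (n : ℕ) (I : Set (ℕ × PM n)) : Prop :=
  ∀ a b x, x ∈ I → tmul (tmul a x) b ∈ I

/-- `I(σ)`: the union of all ideals `I` of `P_n^Φ` whose Rees congruence is contained
in `σ`. -/
def Isig (n : ℕ) (σ : (ℕ × PM n) → (ℕ × PM n) → Prop) : Set (ℕ × PM n) :=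
  ⋃₀ {I | tIdeal n I ∧ ∀ x y, rees I x y → σ x y}

/-- The 0-twisted partition monoid `P_{n,0}^Φ`, carried by `Option (P_n)` with
`none` the zero element `✗`. -/
noncomputable def mul0 (a b : Option (PM n)) : Option (PM n) :=
  match a, b with
  | some α, some β => if Phi α β = 0 then some (pmul α β) else none
  | _, _ => none

/-- `rank a ≤ q`, where `rank ✗ = -∞`. -/
def rnkLE (a : Option (PM n)) (q : ℕ) : Prop :=
  ∀ α, a = some α → rnk α ≤ q

/-- The Rees congruence `R_q` on `P_{n,0}^Φ`. -/
def ReesQ (q : ℕ) (a b : Option (PM n)) : Prop :=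
  a = b ∨ (rnkLE a q ∧ rnkLE b q)

/-- Lift a relation on `P_n` to `P_{n,0}^Φ = P_n ∪ {✗}`. -/
def lift2 (r : PM n → PM n → Prop) (a b : Option (PM n)) : Prop :=
  ∃ α β, a = some α ∧ b = some β ∧ r α β


/-!
The left half is the right half read through the anti-involution `α ↦ α*` that swaps the two
rows. For the right half, if `rank αγ = rank α` then `αγ` has the same upper blocks and the same
transversal upper points as `α`, and this lets one write down `δ` with `αγδ = α`; hence
`α R αγ`. Writing `β = xα`, also `βγδ = β`, so `rank βγ = rank β` and `αγ H βγ`. A witness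
`(a, b, π)` for `pd(α,β)` turns into a witness `(a, b', π)` for `pd(αγ,βγ)` with the same
permutation, and right multiplication by `δ` carries `(αγ,βγ)` back to `(α,β)`.
-/

open Relation

section EqvGen

variable {X Y : Type*}

lemma eqvGen_le_of_equivalence {r e : X → X → Prop} (he : Equivalence e) (h : r ≤ e) :
    EqvGen r ≤ e :=
  fun _ _ hab => he.eqvGen_iff.mp (EqvGen.mono h _ _ hab)

lemma eqvGen_lift {r : X → X → Prop} {s : Y → Y → Prop} (f : X → Y)
    (h : ∀ a b, r a b → EqvGen s (f a) (f b)) {a b : X} (hab : EqvGen r a b) :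
    EqvGen s (f a) (f b) := by
  induction hab with
  | rel a b hab => exact h a b hab
  | refl => exact .refl _
  | symm _ _ _ ih => exact .symm _ _ ih
  | trans _ _ _ _ _ ih1 ih2 => exact .trans _ _ _ ih1 ih2

lemma eq_or_exists_eqvGen_of_injective {f : X → Y} (hf : Function.Injective f)
    {r : X → X → Prop} {s : Y → Y → Prop}
    (h : ∀ x y, s x y → ∃ a b, x = f a ∧ y = f b ∧ EqvGen r a b) {x y : Y} (hxy : EqvGen s x y) :
    x = y ∨ ∃ a b, x = f a ∧ y = f b ∧ EqvGen r a b := by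
  induction hxy with
  | rel x y hxy => exact .inr (h x y hxy)
  | refl => exact .inl rfl
  | symm _ _ _ ih =>
    rcases ih with rfl | ⟨a, b, rfl, rfl, hab⟩
    · exact .inl rfl
    · exact .inr ⟨b, a, rfl, rfl, .symm _ _ hab⟩
  | trans _ _ _ _ _ ih1 ih2 =>
    rcases ih1 with rfl | ⟨a, b, rfl, rfl, hab⟩
    · exact ih2
    rcases ih2 with h' | ⟨a', b', ha', rfl, hab'⟩
    · exact .inr ⟨a, b, rfl, h'.symm, hab⟩
    · exact .inr ⟨a, b', rfl, rfl, .trans _ _ _ hab (hf ha' ▸ hab')⟩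

lemma eqvGen_apply_iff_of_injective {f : X → Y} (hf : Function.Injective f)
    {r : X → X → Prop} {s : Y → Y → Prop}
    (hs : ∀ x y, s x y → ∃ a b, x = f a ∧ y = f b ∧ EqvGen r a b)
    (hr : ∀ a b, r a b → EqvGen s (f a) (f b)) (a b : X) :
    EqvGen s (f a) (f b) ↔ EqvGen r a b := by
  refine ⟨fun h => ?_, eqvGen_lift f hr⟩
  rcases eq_or_exists_eqvGen_of_injective hf hs h with h | ⟨a', b', ha, hb, hab⟩
  · exact hf h ▸ .refl _
  · exact hf ha ▸ hf hb ▸ hab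

lemma eq_of_eqvGen_of_isolated {r : X → X → Prop} {x y : X} (h : EqvGen r x y)
    (hx : ∀ z, ¬ r x z ∧ ¬ r z x) : x = y := by
  have key : ∀ a b, EqvGen r a b → a = b ∨ ((∃ z, r a z ∨ r z a) ∧ ∃ z, r b z ∨ r z b) := by
    intro a b h
    induction h with
    | rel a b hab => exact .inr ⟨⟨b, .inl hab⟩, ⟨a, .inr hab⟩⟩
    | refl => exact .inl rfl
    | symm _ _ _ ih => exact ih.imp Eq.symm And.symm
    | trans _ _ _ _ _ ih1 ih2 =>
      rcases ih1 with rfl | ⟨ha, hb⟩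
      · exact ih2
      · rcases ih2 with rfl | ⟨-, hc⟩
        · exact .inr ⟨ha, hb⟩
        · exact .inr ⟨ha, hc⟩
  rcases key x y h with h | ⟨⟨z, hz | hz⟩, -⟩
  · exact h
  · exact absurd hz (hx z).1
  · exact absurd hz (hx z).2

lemma eqvGen_or_restrict {t e : X → X → Prop} (ht : Equivalence t) (B : X → Prop)
    (he : ∀ x y, e x y → ¬ B x ∧ ¬ B y) {x y : X}
    (h : EqvGen (fun a b => t a b ∨ e a b) x y) (hx : ¬ B x) (hy : ¬ B y) :
    EqvGen (fun a b => (¬ B a ∧ ¬ B b ∧ t a b) ∨ e a b) x y := by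
  set G := EqvGen (fun a b => (¬ B a ∧ ¬ B b ∧ t a b) ∨ e a b)
  set P : X → X → Prop := fun a b =>
    t a b ∨ ∃ u v, ¬ B u ∧ ¬ B v ∧ t a u ∧ G u v ∧ t v b
  have hP : Equivalence P := by
    refine ⟨fun a => .inl (ht.refl a), ?_, ?_⟩
    · rintro a b (h | ⟨u, v, hu, hv, h1, h2, h3⟩)
      · exact .inl (ht.symm h)
      · exact .inr ⟨v, u, hv, hu, ht.symm h3, .symm _ _ h2, ht.symm h1⟩
    · rintro a b c (h | ⟨u, v, hu, hv, h1, h2, h3⟩) (h' | ⟨u', v', hu', hv', h1', h2', h3'⟩)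
      · exact .inl (ht.trans h h')
      · exact .inr ⟨u', v', hu', hv', ht.trans h h1', h2', h3'⟩
      · exact .inr ⟨u, v, hu, hv, h1, h2, ht.trans h3 h'⟩
      · refine .inr ⟨u, v', hu, hv', h1, .trans _ _ _ h2 (.trans _ _ _ ?_ h2'), h3'⟩
        exact .rel _ _ (.inl ⟨hv, hu', ht.trans h3 h1'⟩)
  rcases eqvGen_le_of_equivalence hP (fun a b hab => hab.elim .inl fun hab =>
      .inr ⟨a, b, (he a b hab).1, (he a b hab).2, ht.refl a, .rel _ _ (.inr hab), ht.refl b⟩)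
      x y h with h | ⟨u, v, hu, hv, h1, h2, h3⟩
  · exact .rel _ _ (.inl ⟨hx, hy, h⟩)
  · exact .trans _ _ _ (.rel _ _ (.inl ⟨hx, hu, h1⟩))
      (.trans _ _ _ h2 (.rel _ _ (.inl ⟨hv, hy, h3⟩)))

lemma eqvGen_onFun_iff {f : X → X} (hf : Function.Involutive f) {r : X → X → Prop}
    {x y : X} : EqvGen (fun a b => r (f a) (f b)) x y ↔ EqvGen r (f x) (f y) := by
  refine ⟨eqvGen_lift f fun a b h => .rel _ _ h, fun h => ?_⟩
  rw [← hf x, ← hf y]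
  exact eqvGen_lift f (fun a b h => .rel _ _ (by rwa [hf a, hf b])) h

end EqvGen

open Sum

def rowTop (i : Fin n) : W n := inl i
def rowMid (i : Fin n) : W n := inr (inl i)
def rowBot (i : Fin n) : W n := inr (inr i)

lemma pmul_r_of_left {α : PM n} (γ : PM n) {i j : Fin n} (h : α.r (inl i) (inl j)) :
    (pmul α γ).r (inl i) (inl j) :=
  .rel _ _ (.inl ⟨_, _, h, rfl, rfl⟩)

lemma pmul_r_of_right (γ : PM n) {α : PM n} {i j : Fin n} (h : α.r (inr i) (inr j)) :
    (pmul γ α).r (inr i) (inr j) :=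
  .rel _ _ (.inr ⟨_, _, h, rfl, rfl⟩)

/-! ### The involution `α ↦ α*` -/

instance : InvolutiveStar (PM n) where
  star α := ⟨fun x y => α.r x.swap y.swap, ⟨fun _ => α.refl' _, α.symm', α.trans'⟩⟩
  star_involutive α := Setoid.ext fun x y => by
    change α.r x.swap.swap y.swap.swap ↔ α.r x y
    rw [swap_swap, swap_swap]

def revW : W n → W n
  | inl i => rowBot i
  | inr (inl i) => rowMid i
  | inr (inr i) => rowTop i

lemma revW_involutive : Function.Involutive (revW (n := n)) := by
  rintro (i | i | i) <;> rfl

lemma revW_topMid (u : V n) : revW (topMid u) = midBot u.swap := by cases u <;> rfl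
lemma revW_midBot (u : V n) : revW (midBot u) = topMid u.swap := by cases u <;> rfl
lemma revW_topBot (u : V n) : revW (topBot u) = topBot u.swap := by cases u <;> rfl

lemma graphRel_star_of_graphRel {α β : PM n} {x y : W n} (h : graphRel (star β) (star α) x y) :
    graphRel α β (revW x) (revW y) := by
  rcases h with ⟨u, v, h, rfl, rfl⟩ | ⟨u, v, h, rfl, rfl⟩
  · exact .inr ⟨u.swap, v.swap, h, revW_topMid u, revW_topMid v⟩
  · exact .inl ⟨u.swap, v.swap, h, revW_midBot u, revW_midBot v⟩

lemma graphRel_star (α β : PM n) :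
    graphRel (star β) (star α) = fun x y => graphRel α β (revW x) (revW y) := by
  ext x y
  refine ⟨graphRel_star_of_graphRel, fun h => ?_⟩
  rw [← revW_involutive x, ← revW_involutive y]
  exact graphRel_star_of_graphRel (by rwa [star_star, star_star])

lemma pmul_star (α β : PM n) : pmul (star β) (star α) = star (pmul α β) := by
  ext x y
  change EqvGen _ _ _ ↔ EqvGen _ _ _
  rw [graphRel_star, eqvGen_onFun_iff revW_involutive, revW_topBot, revW_topBot]

/-! ### The monoid `P_n` -/

instance : One (PM n) := ⟨Setoid.ker (Sum.elim id id)⟩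

lemma one_r (x y : V n) : (1 : PM n).r x y ↔ Sum.elim id id x = Sum.elim id id y := Iff.rfl

lemma star_one : star (1 : PM n) = 1 := by
  ext x y; cases x <;> cases y <;> rfl

lemma pmul_one (α : PM n) : pmul α 1 = α := by
  -- collapsing the middle row onto the bottom row turns `Γ(α,1)` into `α`
  set g : W n → V n := Sum.elim inl (Sum.elim inr inr)
  have hg : ∀ x y, conn α 1 x y → α.r (g x) (g y) := by
    refine eqvGen_le_of_equivalence ⟨fun _ => α.refl' _, α.symm', α.trans'⟩ ?_
    rintro x y (⟨u, v, h, rfl, rfl⟩ | ⟨u, v, h, rfl, rfl⟩)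
    · cases u <;> cases v <;> exact h
    · cases u <;> cases v <;> (simp only [one_r] at h; subst h; exact α.refl' _)
  have mid : ∀ u : V n, conn α 1 (topBot u) (topMid u) := by
    rintro (i | i)
    · exact .refl _
    · exact .symm _ _ (.rel _ _ (.inr ⟨inl i, inr i, rfl, rfl, rfl⟩))
  ext a b
  refine ⟨fun h => ?_, fun h => ?_⟩
  · cases a <;> cases b <;> exact hg _ _ h
  · exact .trans _ _ _ (mid a) (.trans _ _ _ (.rel _ _ (.inl ⟨a, b, h, rfl, rfl⟩))
      (.symm _ _ (mid b)))

lemma one_pmul (α : PM n) : pmul 1 α = α := by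
  rw [← star_star α, ← star_one, pmul_star, pmul_one]

abbrev W4 (n : ℕ) := Fin n ⊕ (Fin n ⊕ (Fin n ⊕ Fin n))

def row12 : V n → W4 n
  | inl i => inl i
  | inr i => inr (inl i)

def row23 : V n → W4 n
  | inl i => inr (inl i)
  | inr i => inr (inr (inl i))

def row34 : V n → W4 n
  | inl i => inr (inr (inl i))
  | inr i => inr (inr (inr i))

def edges12 (α β : PM n) (x y : W4 n) : Prop :=
  (∃ u v, α.r u v ∧ x = row12 u ∧ y = row12 v) ∨ ∃ u v, β.r u v ∧ x = row23 u ∧ y = row23 v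

def edges34 (γ : PM n) (x y : W4 n) : Prop :=
  ∃ u v, γ.r u v ∧ x = row34 u ∧ y = row34 v

def conn4 (α β γ : PM n) : W4 n → W4 n → Prop :=
  EqvGen fun x y => edges12 α β x y ∨ edges34 γ x y

def embed123 : W n → W4 n := Sum.map id (Sum.map id inl)

def embed134 : W n → W4 n := Sum.map id inr

lemma embed123_injective : Function.Injective (embed123 (n := n)) :=
  Function.Injective.sumMap (fun _ _ h => h)
    (Function.Injective.sumMap (fun _ _ h => h) inl_injective)

lemma embed134_injective : Function.Injective (embed134 (n := n)) :=
  Function.Injective.sumMap (fun _ _ h => h) inr_injective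

lemma embed123_topMid (u : V n) : embed123 (topMid u) = row12 u := by cases u <;> rfl
lemma embed123_midBot (u : V n) : embed123 (midBot u) = row23 u := by cases u <;> rfl
lemma embed134_topMid (u : V n) : embed134 (topMid u) = embed123 (topBot u) := by
  cases u <;> rfl
lemma embed134_midBot (u : V n) : embed134 (midBot u) = row34 u := by cases u <;> rfl

lemma eqvGen_edges12_iff (α β : PM n) (a b : W n) :
    EqvGen (edges12 α β) (embed123 a) (embed123 b) ↔ conn α β a b := by
  refine eqvGen_apply_iff_of_injective embed123_injective ?_ ?_ a b
  · rintro x y (⟨u, v, h, rfl, rfl⟩ | ⟨u, v, h, rfl, rfl⟩)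
    · exact ⟨topMid u, topMid v, (embed123_topMid u).symm, (embed123_topMid v).symm,
        .rel _ _ (.inl ⟨u, v, h, rfl, rfl⟩)⟩
    · exact ⟨midBot u, midBot v, (embed123_midBot u).symm, (embed123_midBot v).symm,
        .rel _ _ (.inr ⟨u, v, h, rfl, rfl⟩)⟩
  · rintro a b (⟨u, v, h, rfl, rfl⟩ | ⟨u, v, h, rfl, rfl⟩)
    · exact .rel _ _ (.inl ⟨u, v, h, embed123_topMid u, embed123_topMid v⟩)
    · exact .rel _ _ (.inr ⟨u, v, h, embed123_midBot u, embed123_midBot v⟩)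

def IsRow2 (x : W4 n) : Prop := ∃ i, x = inr (inl i)

lemma not_isRow2_embed134 (a : W n) : ¬ IsRow2 (embed134 a) := by
  rintro ⟨i, hi⟩; rcases a with j | j | j <;> cases hi

lemma exists_embed134_of_not_isRow2 {x : W4 n} (h : ¬ IsRow2 x) : ∃ a, x = embed134 a := by
  rcases x with i | i | i | i
  · exact ⟨inl i, rfl⟩
  · exact absurd ⟨i, rfl⟩ h
  · exact ⟨inr (inl i), rfl⟩
  · exact ⟨inr (inr i), rfl⟩

lemma not_isRow2_of_edges34 {γ : PM n} {x y : W4 n} (h : edges34 γ x y) :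
    ¬ IsRow2 x ∧ ¬ IsRow2 y := by
  obtain ⟨u, v, -, rfl, rfl⟩ := h
  exact ⟨embed134_midBot u ▸ not_isRow2_embed134 _, embed134_midBot v ▸ not_isRow2_embed134 _⟩

lemma not_edges12_rowBot (α β : PM n) (k : Fin n) (z : W4 n) :
    ¬ edges12 α β (embed134 (rowBot k)) z ∧ ¬ edges12 α β z (embed134 (rowBot k)) := by
  constructor
  · rintro (⟨u, v, -, hx, -⟩ | ⟨u, v, -, hx, -⟩) <;> cases u <;> cases hx
  · rintro (⟨u, v, -, -, hy⟩ | ⟨u, v, -, -, hy⟩) <;> cases v <;> cases hy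

lemma W.eq_topMid_or_rowBot (a : W n) : (∃ u, a = topMid u) ∨ ∃ k, a = rowBot k := by
  rcases a with i | i | k
  · exact .inl ⟨inl i, rfl⟩
  · exact .inl ⟨inr i, rfl⟩
  · exact .inr ⟨k, rfl⟩

/-- Row 4 is isolated in `edges12`, and on rows 1 and 3 its connectivity is `αβ`. -/
lemma eqvGen_graphRel_of_eqvGen_edges12 {α β γ : PM n} {a b : W n}
    (h : EqvGen (edges12 α β) (embed134 a) (embed134 b)) :
    EqvGen (graphRel (pmul α β) γ) a b := by
  rcases W.eq_topMid_or_rowBot a with ⟨u, rfl⟩ | ⟨k, rfl⟩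
  · rcases W.eq_topMid_or_rowBot b with ⟨v, rfl⟩ | ⟨l, rfl⟩
    · rw [embed134_topMid, embed134_topMid, eqvGen_edges12_iff] at h
      exact .rel _ _ (.inl ⟨u, v, h, rfl, rfl⟩)
    · exact embed134_injective (eq_of_eqvGen_of_isolated (.symm _ _ h)
        (not_edges12_rowBot α β l)) ▸ .refl _
  · exact embed134_injective (eq_of_eqvGen_of_isolated h (not_edges12_rowBot α β k)) ▸ .refl _

lemma conn_pmul_iff_conn4 (α β γ : PM n) (x y : W n) :
    conn (pmul α β) γ x y ↔ conn4 α β γ (embed134 x) (embed134 y) := by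
  have embed : ∀ a b : W n, EqvGen (fun a b =>
      (¬ IsRow2 a ∧ ¬ IsRow2 b ∧ EqvGen (edges12 α β) a b) ∨
      edges34 γ a b) (embed134 a) (embed134 b) ↔ conn (pmul α β) γ a b := by
    refine eqvGen_apply_iff_of_injective embed134_injective ?_ ?_
    · rintro x y (⟨hx, hy, hxy⟩ | ⟨u, v, h, rfl, rfl⟩)
      · obtain ⟨a, rfl⟩ := exists_embed134_of_not_isRow2 hx
        obtain ⟨b, rfl⟩ := exists_embed134_of_not_isRow2 hy
        exact ⟨a, b, rfl, rfl, eqvGen_graphRel_of_eqvGen_edges12 hxy⟩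
      · exact ⟨midBot u, midBot v, (embed134_midBot u).symm, (embed134_midBot v).symm,
          .rel _ _ (.inr ⟨u, v, h, rfl, rfl⟩)⟩
    · rintro a b (⟨u, v, h, rfl, rfl⟩ | ⟨u, v, h, rfl, rfl⟩)
      · refine .rel _ _ (.inl ⟨not_isRow2_embed134 _, not_isRow2_embed134 _, ?_⟩)
        rwa [embed134_topMid, embed134_topMid, eqvGen_edges12_iff]
      · exact .rel _ _ (.inr ⟨u, v, h, embed134_midBot u, embed134_midBot v⟩)
  rw [← embed]
  constructor
  · refine eqvGen_le_of_equivalence (EqvGen.is_equivalence _) ?_ _ _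
    rintro a b (⟨-, -, h⟩ | h)
    · exact EqvGen.mono (fun _ _ => .inl) _ _ h
    · exact .rel _ _ (.inr h)
  · intro h
    refine eqvGen_or_restrict (EqvGen.is_equivalence _) IsRow2
      (fun _ _ => not_isRow2_of_edges34) ?_ (not_isRow2_embed134 x) (not_isRow2_embed134 y)
    exact EqvGen.mono (fun _ _ => Or.imp_left (.rel _ _)) _ _ h

def rev4 : W4 n → W4 n
  | inl i => inr (inr (inr i))
  | inr (inl i) => inr (inr (inl i))
  | inr (inr (inl i)) => inr (inl i)
  | inr (inr (inr i)) => inl i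

lemma rev4_involutive : Function.Involutive (rev4 (n := n)) := by
  rintro (i | i | i | i) <;> rfl

lemma edges_star_of_edges {α β γ : PM n} {x y : W4 n}
    (h : edges12 (star γ) (star β) x y ∨ edges34 (star α) x y) :
    edges12 α β (rev4 x) (rev4 y) ∨ edges34 γ (rev4 x) (rev4 y) := by
  have r12 : ∀ u : V n, rev4 (row12 u) = row34 u.swap := by rintro (i | i) <;> rfl
  have r23 : ∀ u : V n, rev4 (row23 u) = row23 u.swap := by rintro (i | i) <;> rfl
  have r34 : ∀ u : V n, rev4 (row34 u) = row12 u.swap := by rintro (i | i) <;> rfl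
  rcases h with (⟨u, v, h, rfl, rfl⟩ | ⟨u, v, h, rfl, rfl⟩) | ⟨u, v, h, rfl, rfl⟩
  · exact .inr ⟨u.swap, v.swap, h, r12 u, r12 v⟩
  · exact .inl (.inr ⟨u.swap, v.swap, h, r23 u, r23 v⟩)
  · exact .inl (.inl ⟨u.swap, v.swap, h, r34 u, r34 v⟩)

lemma edges_star (α β γ : PM n) :
    (fun x y => edges12 (star γ) (star β) x y ∨ edges34 (star α) x y) =
      fun x y => edges12 α β (rev4 x) (rev4 y) ∨ edges34 γ (rev4 x) (rev4 y) := by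
  ext x y
  refine ⟨edges_star_of_edges, fun h => ?_⟩
  rw [← rev4_involutive x, ← rev4_involutive y]
  exact edges_star_of_edges (by rwa [star_star, star_star, star_star])

lemma conn4_star (α β γ : PM n) (x y : W4 n) :
    conn4 (star γ) (star β) (star α) x y ↔ conn4 α β γ (rev4 x) (rev4 y) := by
  rw [conn4, edges_star]
  exact eqvGen_onFun_iff (r := fun x y => edges12 α β x y ∨ edges34 γ x y) rev4_involutive

lemma pmul_assoc (α β γ : PM n) : pmul (pmul α β) γ = pmul α (pmul β γ) := by
  have hR : pmul α (pmul β γ) = star (pmul (pmul (star γ) (star β)) (star α)) := by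
    simp only [← pmul_star, star_star]
  have hrev : ∀ u : V n, rev4 (embed134 (topBot u.swap)) = embed134 (topBot u) := by
    rintro (i | i) <;> rfl
  ext x y
  rw [hR]
  change conn _ _ (topBot x) (topBot y) ↔ conn _ _ (topBot x.swap) (topBot y.swap)
  rw [conn_pmul_iff_conn4, conn_pmul_iff_conn4, conn4_star, hrev, hrev]

instance : Monoid (PM n) where
  mul := pmul
  mul_assoc := pmul_assoc
  one_mul := one_pmul
  mul_one := pmul_one

instance : StarMul (PM n) :=
  ⟨fun α β => (pmul_star α β).symm⟩

/-! ### Green's relations -/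

section Green

variable {M : Type*} [Monoid M] {x y z w : M}

lemma exists_mul_eq_of_greenL (h : greenL (· * ·) x y) : ∃ a, a * x = y := by
  have : y ∈ Set.range (· * y) := ⟨1, one_mul y⟩
  rwa [← show Set.range (· * x) = Set.range (· * y) from h] at this

lemma greenL.mul_right (h : greenL (· * ·) x y) (z : M) : greenL (· * ·) (x * z) (y * z) := by
  have hcomp : ∀ x : M, Set.range (· * (x * z)) = (· * z) '' Set.range (· * x) := fun x => by
    rw [← Set.range_comp]; simp only [Function.comp_def, mul_assoc]
  show Set.range (· * (x * z)) = Set.range (· * (y * z))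
  rw [hcomp, hcomp, show Set.range (· * x) = Set.range (· * y) from h]

lemma greenR_mul_of_mul_mul_eq (h : x * z * w = x) : greenR (· * ·) x (x * z) := by
  show Set.range (x * ·) = Set.range (x * z * ·)
  refine subset_antisymm ?_ ?_
  · rintro _ ⟨b, rfl⟩
    exact ⟨w * b, show x * z * (w * b) = x * b by rw [← mul_assoc, h]⟩
  · rintro _ ⟨b, rfl⟩
    exact ⟨z * b, (mul_assoc x z b).symm⟩

lemma mul_mul_eq_of_greenL (h : greenL (· * ·) x y) (hx : x * z * w = x) : y * z * w = y := by
  obtain ⟨a, rfl⟩ := exists_mul_eq_of_greenL h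
  rw [mul_assoc a, mul_assoc a, hx]

variable [StarMul M]

lemma range_star_mul (x : M) : Set.range (star x * ·) = star '' Set.range (· * x) := by
  rw [← Set.range_comp, ← star_involutive.surjective.range_comp]
  congr 1; ext b; simp

lemma greenR_star_iff : greenR (· * ·) (star x) (star y) ↔ greenL (· * ·) x y := by
  show Set.range (star x * ·) = Set.range (star y * ·) ↔ _
  rw [range_star_mul, range_star_mul, star_injective.image_injective.eq_iff]
  rfl

lemma greenL_star_iff : greenL (· * ·) (star x) (star y) ↔ greenR (· * ·) x y := by
  rw [← greenR_star_iff, star_star, star_star]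

lemma greenH.star (h : greenH (· * ·) x y) : greenH (· * ·) (star x) (star y) :=
  ⟨greenR_star_iff.mpr h.2, greenL_star_iff.mpr h.1⟩

end Green

/-! ### Connectivity in `Γ(α,γ)` -/

def connLow (α γ : PM n) : W n → W n → Prop :=
  EqvGen fun x y => (∃ m m', α.r (inr m) (inr m') ∧ x = rowMid m ∧ y = rowMid m') ∨
    ∃ u v, γ.r u v ∧ x = midBot u ∧ y = midBot v

lemma connLow_equivalence (α γ : PM n) : Equivalence (connLow α γ) := EqvGen.is_equivalence _

lemma connLow_rowMid {α : PM n} (γ : PM n) {m m' : Fin n} (h : α.r (inr m) (inr m')) :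
    connLow α γ (rowMid m) (rowMid m') :=
  .rel _ _ (.inl ⟨m, m', h, rfl, rfl⟩)

lemma connLow_congr {α β : PM n} (γ : PM n)
    (h : ∀ m m', α.r (inr m) (inr m') ↔ β.r (inr m) (inr m')) {x y : W n} :
    connLow α γ x y → connLow β γ x y := by
  refine EqvGen.mono (fun _ _ => Or.imp_left ?_) _ _
  rintro ⟨m, m', hm, hx, hy⟩
  exact ⟨m, m', (h m m').mp hm, hx, hy⟩

lemma conn_of_connLow {α γ : PM n} {x y : W n} (h : connLow α γ x y) : conn α γ x y := by
  refine EqvGen.mono (fun _ _ => Or.imp_left ?_) _ _ h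
  rintro ⟨m, m', hm, rfl, rfl⟩
  exact ⟨inr m, inr m', hm, rfl, rfl⟩

/-- The points of the middle and bottom rows through which `x` reaches `connLow α γ`. -/
def Attached (α : PM n) : W n → W n → Prop
  | inl i, s => ∃ m, α.r (inl i) (inr m) ∧ s = rowMid m
  | inr w, s => s = inr w

lemma connLow_of_attached {α : PM n} (γ : PM n) {x s s' : W n} (hs : Attached α x s)
    (hs' : Attached α x s') : connLow α γ s s' := by
  rcases x with i | w
  · obtain ⟨m, hm, rfl⟩ := hs
    obtain ⟨m', hm', rfl⟩ := hs'
    exact connLow_rowMid γ (α.trans' (α.symm' hm) hm')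
  · exact hs ▸ hs' ▸ (connLow_equivalence α γ).refl _

lemma attached_of_r {α : PM n} {i j : Fin n} (h : α.r (inl i) (inl j)) {s : W n}
    (hs : Attached α (inl j) s) : Attached α (inl i) s :=
  let ⟨m, hm, hs⟩ := hs; ⟨m, α.trans' h hm, hs⟩

def ConnDesc (α γ : PM n) (x y : W n) : Prop :=
  (∃ i j, x = inl i ∧ y = inl j ∧ α.r (inl i) (inl j)) ∨
    ∃ s s', Attached α x s ∧ Attached α y s' ∧ connLow α γ s s'

lemma connDesc_equivalence (α γ : PM n) : Equivalence (ConnDesc α γ) := by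
  have hL := connLow_equivalence α γ
  refine ⟨fun x => ?_, ?_, ?_⟩
  · rcases x with i | w
    · exact .inl ⟨i, i, rfl, rfl, α.refl' _⟩
    · exact .inr ⟨inr w, inr w, rfl, rfl, hL.refl _⟩
  · rintro x y (⟨i, j, rfl, rfl, h⟩ | ⟨s, s', hs, hs', h⟩)
    · exact .inl ⟨j, i, rfl, rfl, α.symm' h⟩
    · exact .inr ⟨s', s, hs', hs, hL.symm h⟩
  · rintro x y z (⟨i, j, rfl, rfl, h⟩ | ⟨s, s₁, hs, hs₁, h⟩)
      (⟨j', k, hj, rfl, h'⟩ | ⟨s₂, s', hs₂, hs', h'⟩)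
    · cases hj; exact .inl ⟨i, k, rfl, rfl, α.trans' h h'⟩
    · exact .inr ⟨s₂, s', attached_of_r h hs₂, hs', h'⟩
    · cases hj; exact .inr ⟨s, s₁, hs, attached_of_r (α.symm' h') hs₁, h⟩
    · exact .inr ⟨s, s', hs, hs', hL.trans h (hL.trans (connLow_of_attached γ hs₁ hs₂) h')⟩

lemma connDesc_of_graphRel {α γ : PM n} {x y : W n} (h : graphRel α γ x y) :
    ConnDesc α γ x y := by
  have hL := connLow_equivalence α γ
  rcases h with ⟨u, v, h, rfl, rfl⟩ | ⟨u, v, h, rfl, rfl⟩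
  · rcases u with i | m <;> rcases v with j | m'
    · exact .inl ⟨i, j, rfl, rfl, h⟩
    · exact .inr ⟨_, _, ⟨m', h, rfl⟩, rfl, hL.refl _⟩
    · exact .inr ⟨_, _, rfl, ⟨m, α.symm' h, rfl⟩, hL.refl _⟩
    · exact .inr ⟨_, _, rfl, rfl, connLow_rowMid γ h⟩
  · exact .inr ⟨_, _, by cases u <;> rfl, by cases v <;> rfl,
      .rel _ _ (.inr ⟨u, v, h, rfl, rfl⟩)⟩

lemma conn_of_attached {α : PM n} (γ : PM n) {x s : W n} (hs : Attached α x s) :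
    conn α γ x s := by
  rcases x with i | w
  · obtain ⟨m, hm, rfl⟩ := hs
    exact .rel _ _ (.inl ⟨inl i, inr m, hm, rfl, rfl⟩)
  · exact hs ▸ .refl _

lemma conn_iff_connDesc (α γ : PM n) (x y : W n) : conn α γ x y ↔ ConnDesc α γ x y := by
  refine ⟨eqvGen_le_of_equivalence (connDesc_equivalence α γ)
    (fun _ _ => connDesc_of_graphRel) x y, ?_⟩
  rintro (⟨i, j, rfl, rfl, h⟩ | ⟨s, s', hs, hs', h⟩)
  · exact .rel _ _ (.inl ⟨inl i, inl j, h, rfl, rfl⟩)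
  · exact .trans _ _ _ (conn_of_attached γ hs)
      (.trans _ _ _ (conn_of_connLow h) (.symm _ _ (conn_of_attached γ hs')))

lemma pmul_r_inl_inl_iff (α γ : PM n) (i j : Fin n) :
    (pmul α γ).r (inl i) (inl j) ↔ α.r (inl i) (inl j) ∨
      ∃ m m', α.r (inl i) (inr m) ∧ α.r (inl j) (inr m') ∧
        connLow α γ (rowMid m) (rowMid m') := by
  refine (conn_iff_connDesc α γ _ _).trans ⟨?_, ?_⟩
  · rintro (⟨i', j', hi, hj, h⟩ | ⟨s, s', ⟨m, hm, rfl⟩, ⟨m', hm', rfl⟩, h⟩)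
    · cases hi; cases hj; exact .inl h
    · exact .inr ⟨m, m', hm, hm', h⟩
  · rintro (h | ⟨m, m', hm, hm', h⟩)
    · exact .inl ⟨i, j, rfl, rfl, h⟩
    · exact .inr ⟨_, _, ⟨m, hm, rfl⟩, ⟨m', hm', rfl⟩, h⟩

lemma pmul_r_inl_inr_iff (α γ : PM n) (i k : Fin n) :
    (pmul α γ).r (inl i) (inr k) ↔
      ∃ m, α.r (inl i) (inr m) ∧ connLow α γ (rowMid m) (rowBot k) := by
  refine (conn_iff_connDesc α γ _ _).trans ⟨?_, ?_⟩
  · rintro (⟨i', j', -, h, -⟩ | ⟨s, s', ⟨m, hm, rfl⟩, hs', h⟩)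
    · cases h
    · exact ⟨m, hm, (show s' = rowBot k from hs') ▸ h⟩
  · rintro ⟨m, hm, h⟩
    exact .inr ⟨_, _, ⟨m, hm, rfl⟩, rfl, h⟩

lemma pmul_r_inr_inr_iff (α γ : PM n) (k k' : Fin n) :
    (pmul α γ).r (inr k) (inr k') ↔ connLow α γ (rowBot k) (rowBot k') := by
  refine (conn_iff_connDesc α γ _ _).trans ⟨?_, fun h => .inr ⟨_, _, rfl, rfl, h⟩⟩
  rintro (⟨i', j', h, -, -⟩ | ⟨s, s', hs, hs', h⟩)
  · cases h
  · exact (show s = rowBot k from hs) ▸ (show s' = rowBot k' from hs') ▸ h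

/-! ### Rank -/

/-- `rnk α` is `Nat.card (Transversal α)`. -/
def Transversal (α : PM n) : Type :=
  {c : Quotient α // (∃ i, Quotient.mk α (inl i) = c) ∧ ∃ i, Quotient.mk α (inr i) = c}

instance (α : PM n) : Finite (Transversal α) := Subtype.finite

lemma mk_eq_mk_iff {α : PM n} {x y : V n} : Quotient.mk α x = Quotient.mk α y ↔ α.r x y :=
  Quotient.eq

def Transversal.ofR {α : PM n} {i m : Fin n} (h : α.r (inl i) (inr m)) : Transversal α :=
  ⟨Quotient.mk α (inl i), ⟨i, rfl⟩, ⟨m, mk_eq_mk_iff.mpr (α.symm' h)⟩⟩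

noncomputable def Transversal.upper {α : PM n} (C : Transversal α) : Fin n := C.2.1.choose

lemma Transversal.mk_upper {α : PM n} (C : Transversal α) :
    Quotient.mk α (inl C.upper) = C.1 := C.2.1.choose_spec

lemma Transversal.exists_r_upper {α : PM n} (C : Transversal α) :
    ∃ k, α.r (inl C.upper) (inr k) :=
  let ⟨k, hk⟩ := C.2.2; ⟨k, mk_eq_mk_iff.mp (C.mk_upper.trans hk.symm)⟩

lemma exists_r_inr_of_pmul {α γ : PM n} {i k : Fin n} (h : (pmul α γ).r (inl i) (inr k)) :
    ∃ m, α.r (inl i) (inr m) :=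
  let ⟨m, hm, _⟩ := (pmul_r_inl_inr_iff α γ i k).mp h; ⟨m, hm⟩

/-- A transversal block of `αγ` is sent to the `α`-block of one of its upper points. -/
noncomputable def transversalPmul (α γ : PM n) (C : Transversal (pmul α γ)) : Transversal α :=
  Transversal.ofR (exists_r_inr_of_pmul C.exists_r_upper.choose_spec).choose_spec

lemma transversalPmul_val (α γ : PM n) (C : Transversal (pmul α γ)) :
    (transversalPmul α γ C).1 = Quotient.mk α (inl C.upper) := rfl

lemma transversalPmul_injective (α γ : PM n) : Function.Injective (transversalPmul α γ) := by
  intro C C' h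
  have h' := congrArg Subtype.val h
  rw [transversalPmul_val, transversalPmul_val, mk_eq_mk_iff] at h'
  exact Subtype.ext (C.mk_upper.symm.trans
    ((mk_eq_mk_iff.mpr (pmul_r_of_left γ h')).trans C'.mk_upper))

lemma rnk_pmul_le (α γ : PM n) : rnk (pmul α γ) ≤ rnk α :=
  Nat.card_le_card_of_injective _ (transversalPmul_injective α γ)

lemma rnk_star (α : PM n) : rnk (star α) = rnk α := by
  refine Nat.card_congr (Equiv.subtypeEquiv
    (Quotient.congr (Equiv.sumComm (Fin n) (Fin n)) fun _ _ => Iff.rfl) fun c => ?_)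
  induction c using Quotient.inductionOn with | h a => ?_
  show (_ ∧ _) ↔ (∃ i, Quotient.mk α (inl i) = Quotient.mk α a.swap) ∧
    ∃ i, Quotient.mk α (inr i) = Quotient.mk α a.swap
  simp only [mk_eq_mk_iff]
  exact And.comm

lemma exists_transversal_of_rnk_pmul_eq {α γ : PM n} (hr : rnk (pmul α γ) = rnk α)
    {i m : Fin n} (h : α.r (inl i) (inr m)) :
    ∃ C : Transversal (pmul α γ), transversalPmul α γ C = Transversal.ofR h ∧
      C.1 = Quotient.mk (pmul α γ) (inl i) := by
  obtain ⟨C, hC⟩ := ((Nat.bijective_iff_injective_and_card _).mpr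
    ⟨transversalPmul_injective α γ, hr⟩).surjective (Transversal.ofR h)
  refine ⟨C, hC, C.mk_upper.symm.trans (mk_eq_mk_iff.mpr (pmul_r_of_left γ ?_))⟩
  exact mk_eq_mk_iff.mp (congrArg Subtype.val hC)

lemma exists_pmul_r_inr_of_rnk_pmul_eq {α γ : PM n} (hr : rnk (pmul α γ) = rnk α)
    {i m : Fin n} (h : α.r (inl i) (inr m)) :
    ∃ k, (pmul α γ).r (inl i) (inr k) := by
  obtain ⟨C, -, hC⟩ := exists_transversal_of_rnk_pmul_eq hr h
  obtain ⟨k, hk⟩ := C.2.2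
  exact ⟨k, mk_eq_mk_iff.mp (hC.symm.trans hk.symm)⟩

lemma r_inl_of_rnk_pmul_eq {α γ : PM n} (hr : rnk (pmul α γ) = rnk α) {i j : Fin n}
    (h : (pmul α γ).r (inl i) (inl j)) :
    α.r (inl i) (inl j) := by
  rcases (pmul_r_inl_inl_iff α γ i j).mp h with h | ⟨m, m', hm, hm', -⟩
  · exact h
  obtain ⟨C, hCα, hC⟩ := exists_transversal_of_rnk_pmul_eq hr hm
  obtain ⟨C', hCα', hC'⟩ := exists_transversal_of_rnk_pmul_eq hr hm'
  have hCC' : C = C' := Subtype.ext (hC.trans ((mk_eq_mk_iff.mpr h).trans hC'.symm))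
  rw [hCC', hCα'] at hCα
  exact mk_eq_mk_iff.mp (congrArg Subtype.val hCα).symm

/-! ### Stability -/

lemma midBot_eq_inr (w : V n) : midBot w = inr w := by cases w <;> rfl

lemma connLow_inr_iff {α γ : PM n} (h : ∀ m m', α.r (inr m) (inr m') → γ.r (inl m) (inl m'))
    (w w' : V n) : connLow α γ (inr w) (inr w') ↔ γ.r w w' := by
  refine ⟨fun hc => ?_, fun hw => .rel _ _ (.inr ⟨w, w', hw, (midBot_eq_inr w).symm,
    (midBot_eq_inr w').symm⟩)⟩
  -- collapse each middle or bottom point to its `γ`-block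
  let f : W n → Fin n ⊕ Quotient γ := Sum.elim inl fun w => inr (Quotient.mk γ w)
  have hf : f (inr w) = f (inr w') := by
    refine eqvGen_le_of_equivalence (e := fun x y => f x = f y)
      ⟨fun _ => rfl, Eq.symm, Eq.trans⟩ ?_ _ _ hc
    rintro _ _ (⟨m, m', hm, rfl, rfl⟩ | ⟨u, v, huv, rfl, rfl⟩)
    · exact congrArg inr (mk_eq_mk_iff.mpr (h m m' hm))
    · rw [midBot_eq_inr, midBot_eq_inr]
      exact congrArg inr (mk_eq_mk_iff.mpr huv)
  exact mk_eq_mk_iff.mp (inr_injective hf)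

/-- The partition `δ` with `cδ = α`: the lower blocks of `c` on top, those of `α` at the bottom,
and the lower parts of the transversals of `c` and `α` through a common upper point joined. -/
def RightFactorRel (c α : PM n) : V n → V n → Prop
  | inl i, inl j => c.r (inr i) (inr j)
  | inl i, inr j => ∃ k, c.r (inl k) (inr i) ∧ α.r (inl k) (inr j)
  | inr i, inl j => ∃ k, c.r (inl k) (inr j) ∧ α.r (inl k) (inr i)
  | inr i, inr j => α.r (inr i) (inr j)

lemma rightFactorRel_equivalence {c α : PM n}
    (hU : ∀ i j, c.r (inl i) (inl j) ↔ α.r (inl i) (inl j)) :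
    Equivalence (RightFactorRel c α) := by
  refine ⟨?_, ?_, ?_⟩
  · rintro (i | i)
    · exact c.refl' _
    · exact α.refl' _
  · rintro (i | i) (j | j) h
    · exact c.symm' h
    · exact h
    · exact h
    · exact α.symm' h
  · rintro (i | i) (j | j) (k | k) h h'
    · exact c.trans' h h'
    · obtain ⟨l, h1, h2⟩ := h'
      exact ⟨l, c.trans' h1 (c.symm' h), h2⟩
    · obtain ⟨l, h1, h2⟩ := h
      obtain ⟨l', h1', h2'⟩ := h'
      have hll' : c.r (inl l) (inl l') := (hU l l').mpr (α.trans' h2 (α.symm' h2'))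
      exact c.trans' (c.symm' h1) (c.trans' hll' h1')
    · obtain ⟨l, h1, h2⟩ := h
      exact ⟨l, h1, α.trans' h2 h'⟩
    · obtain ⟨l, h1, h2⟩ := h
      exact ⟨l, c.trans' h1 h', h2⟩
    · obtain ⟨l, h1, h2⟩ := h
      obtain ⟨l', h1', h2'⟩ := h'
      have hll' : α.r (inl l) (inl l') := (hU l l').mp (c.trans' h1 (c.symm' h1'))
      exact α.trans' (α.symm' h2) (α.trans' hll' h2')
    · obtain ⟨l, h1, h2⟩ := h'
      exact ⟨l, h1, α.trans' h2 (α.symm' h)⟩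
    · exact α.trans' h h'

def rightFactor (c α : PM n) (hU : ∀ i j, c.r (inl i) (inl j) ↔ α.r (inl i) (inl j)) : PM n :=
  ⟨RightFactorRel c α, rightFactorRel_equivalence hU⟩

lemma pmul_rightFactor {c α : PM n} (hU : ∀ i j, c.r (inl i) (inl j) ↔ α.r (inl i) (inl j))
    (hT : ∀ i j, α.r (inl i) (inr j) → ∃ m, c.r (inl i) (inr m)) :
    pmul c (rightFactor c α hU) = α := by
  set δ := rightFactor c α hU
  have hlow : ∀ w w', connLow c δ (inr w) (inr w') ↔ δ.r w w' :=
    connLow_inr_iff fun _ _ h => h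
  have cross : ∀ i j, (pmul c δ).r (inl i) (inr j) ↔ α.r (inl i) (inr j) := fun i j =>
    (pmul_r_inl_inr_iff c δ i j).trans <| by
      refine ⟨fun ⟨m, hm, h⟩ => ?_, fun h => ?_⟩
      · obtain ⟨k, hk, hkj⟩ := (hlow (inl m) (inr j)).mp h
        exact α.trans' ((hU i k).mp (c.trans' hm (c.symm' hk))) hkj
      · obtain ⟨m, hm⟩ := hT i j h
        exact ⟨m, hm, (hlow (inl m) (inr j)).mpr ⟨i, hm, h⟩⟩
  ext x y
  rcases x with i | i <;> rcases y with j | j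
  · refine (pmul_r_inl_inl_iff c δ i j).trans (Iff.trans ?_ (hU i j))
    refine ⟨fun h => h.elim id fun ⟨m, m', hm, hm', h⟩ => ?_, .inl⟩
    exact c.trans' hm (c.trans' ((hlow (inl m) (inl m')).mp h) (c.symm' hm'))
  · exact cross i j
  · exact ⟨fun h => α.symm' ((cross j i).mp ((pmul c δ).symm' h)),
      fun h => (pmul c δ).symm' ((cross j i).mpr (α.symm' h))⟩
  · exact (pmul_r_inr_inr_iff c δ i j).trans (hlow (inr i) (inr j))

lemma exists_pmul_pmul_eq_of_rnk {α γ : PM n} (hr : rnk (pmul α γ) = rnk α) :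
    ∃ δ, pmul (pmul α γ) δ = α :=
  ⟨_, pmul_rightFactor (fun _ _ => ⟨r_inl_of_rnk_pmul_eq hr, pmul_r_of_left γ⟩)
    fun _ _ => exists_pmul_r_inr_of_rnk_pmul_eq hr⟩

/-! ### Compatibility of `ν_N` -/

lemma r_inr_iff_of_greenL {α β : PM n} (hL : greenL (pmul (n := n)) α β) (i j : Fin n) :
    α.r (inr i) (inr j) ↔ β.r (inr i) (inr j) := by
  obtain ⟨x, rfl⟩ := exists_mul_eq_of_greenL hL
  obtain ⟨y, hy⟩ := exists_mul_eq_of_greenL (Eq.symm hL)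
  exact ⟨pmul_r_of_right x, fun h => hy ▸ pmul_r_of_right y h⟩

lemma greenR_pmul_of_rnk {α γ : PM n} (hr : rnk (pmul α γ) = rnk α) :
    greenR (pmul (n := n)) α (pmul α γ) :=
  let ⟨_, hδ⟩ := exists_pmul_pmul_eq_of_rnk hr; greenR_mul_of_mul_mul_eq hδ

lemma rnk_pmul_eq_of_greenL {α β γ : PM n} (hL : greenL (pmul (n := n)) α β)
    (hr : rnk (pmul α γ) = rnk α) : rnk (pmul β γ) = rnk β := by
  obtain ⟨δ, hδ⟩ := exists_pmul_pmul_eq_of_rnk hr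
  have hβ : pmul (pmul β γ) δ = β := mul_mul_eq_of_greenL hL hδ
  refine le_antisymm (rnk_pmul_le β γ) ?_
  calc rnk β = rnk (pmul (pmul β γ) δ) := by rw [hβ]
    _ ≤ rnk (pmul β γ) := rnk_pmul_le _ _

lemma pdIn_pmul_right {q : ℕ} {P : Equiv.Perm (Fin q) → Prop} {α β γ : PM n}
    (hL : greenL (pmul (n := n)) α β) (hr : rnk (pmul α γ) = rnk α) (h : pdIn q P α β) :
    pdIn q P (pmul α γ) (pmul β γ) := by
  obtain ⟨a, b, π, hdist, hα, hβ, hπ⟩ := h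
  choose b' hb' using fun s => exists_pmul_r_inr_of_rnk_pmul_eq hr (hα s)
  refine ⟨a, b', π, fun s t h => hdist s t (r_inl_of_rnk_pmul_eq hr h), hb', fun s => ?_, hπ⟩
  obtain ⟨m, hm, hconn⟩ := (pmul_r_inl_inr_iff α γ _ _).mp (hb' (π s))
  have hlow : β.r (inr (b (π s))) (inr m) :=
    (r_inr_iff_of_greenL hL _ _).mp (α.trans' (α.symm' (hα (π s))) hm)
  exact (pmul_r_inl_inr_iff β γ _ _).mpr
    ⟨m, β.trans' (hβ s) hlow, connLow_congr γ (r_inr_iff_of_greenL hL) hconn⟩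

lemma nuRel.pmul_right {q : ℕ} {N : Subgroup (Equiv.Perm (Fin q))} {α β γ : PM n}
    (h : nuRel q N α β) (hr : rnk (pmul α γ) = q) : nuRel q N (pmul α γ) (pmul β γ) := by
  obtain ⟨hα, hβ, hH, hpd⟩ := h
  have hrα : rnk (pmul α γ) = rnk α := hr.trans hα.symm
  have hrβ : rnk (pmul β γ) = rnk β := rnk_pmul_eq_of_greenL hH.2 hrα
  have hR : greenR (pmul (n := n)) (pmul α γ) (pmul β γ) :=
    (Eq.symm (greenR_pmul_of_rnk hrα)).trans (Eq.trans hH.1 (greenR_pmul_of_rnk hrβ))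
  exact ⟨hr, hrβ.trans hβ, ⟨hR, hH.2.mul_right γ⟩, pdIn_pmul_right hH.2 hrα hpd⟩

lemma nu_compatibility_right {q : ℕ} {N : Subgroup (Equiv.Perm (Fin q))} {α β : PM n}
    (hα : rnk α = q) (hβ : rnk β = q) (hH : greenH (pmul (n := n)) α β) (γ : PM n) :
    (rnk (pmul α γ) = q ↔ rnk (pmul β γ) = q) ∧
      (rnk (pmul α γ) = q → (nuRel q N α β ↔ nuRel q N (pmul α γ) (pmul β γ))) := by
  refine ⟨⟨fun h => (rnk_pmul_eq_of_greenL hH.2 (h.trans hα.symm)).trans hβ,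
    fun h => (rnk_pmul_eq_of_greenL (Eq.symm hH.2) (h.trans hβ.symm)).trans hα⟩, fun hr => ?_⟩
  -- right multiplication by `δ` undoes right multiplication by `γ` on the whole `L`-class of `α`
  obtain ⟨δ, hδ⟩ := exists_pmul_pmul_eq_of_rnk (hr.trans hα.symm)
  have hβδ : pmul (pmul β γ) δ = β := mul_mul_eq_of_greenL hH.2 hδ
  refine ⟨fun h => h.pmul_right hr, fun h => ?_⟩
  have := h.pmul_right (γ := δ) (by rw [hδ, hα])
  rwa [hδ, hβδ] at this

lemma pdIn_star {q : ℕ} {N : Subgroup (Equiv.Perm (Fin q))} {α β : PM n}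
    (h : pdIn q (· ∈ N) α β) : pdIn q (· ∈ N) (star α) (star β) := by
  obtain ⟨a, b, π, hdist, hα, hβ, hπ⟩ := h
  refine ⟨b, a, π⁻¹, fun s t h => hdist s t ?_, fun s => α.symm' (hα s), fun s => ?_,
    N.inv_mem hπ⟩
  · exact α.trans' (hα s) (α.trans' h (α.symm' (hα t)))
  · have := hβ (π⁻¹ s)
    rw [Equiv.Perm.inv_def, Equiv.apply_symm_apply] at this
    exact β.symm' this

lemma nuRel.star {q : ℕ} {N : Subgroup (Equiv.Perm (Fin q))} {α β : PM n}
    (h : nuRel q N α β) : nuRel q N (star α) (star β) :=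
  ⟨(rnk_star α).trans h.1, (rnk_star β).trans h.2.1, h.2.2.1.star, pdIn_star h.2.2.2⟩

@[simp] lemma nuRel_star_iff {q : ℕ} {N : Subgroup (Equiv.Perm (Fin q))} {α β : PM n} :
    nuRel q N (star α) (star β) ↔ nuRel q N α β :=
  ⟨fun h => by simpa only [star_star] using h.star, nuRel.star⟩

theorem nu_compatibility_general (n q : ℕ)
    (N : Subgroup (Equiv.Perm (Fin q)))
    (α β : PM n) (hα : rnk α = q) (hβ : rnk β = q)
    (hH : greenH (pmul (n := n)) α β) (γ : PM n) :
    ((rnk (pmul α γ) = q ↔ rnk (pmul β γ) = q) ∧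
      (rnk (pmul α γ) = q →
        (nuRel q N α β ↔ nuRel q N (pmul α γ) (pmul β γ)))) ∧
    ((rnk (pmul γ α) = q ↔ rnk (pmul γ β) = q) ∧
      (rnk (pmul γ α) = q →
        (nuRel q N α β ↔ nuRel q N (pmul γ α) (pmul γ β)))) := by
  refine ⟨nu_compatibility_right hα hβ hH γ, ?_⟩
  have := nu_compatibility_right (N := N) ((rnk_star α).trans hα) ((rnk_star β).trans hβ)
    hH.star (star γ)
  simpa only [pmul_star, rnk_star, nuRel_star_iff] using this

/-- For `2 ≤ q ≤ n`, `N ⊴ S_q`, H-related `α, β ∈ D_q` and `γ ∈ P_n`: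
`αγ ∈ D_q ↔ βγ ∈ D_q`, in which case `(α,β) ∈ ν_N ↔ (αγ,βγ) ∈ ν_N`; and dually on the
left. -/
theorem nu_compatibility (n q : ℕ) (hq : 2 ≤ q) (hqn : q ≤ n)
    (N : Subgroup (Equiv.Perm (Fin q))) (hN : N.Normal)
    (α β : PM n) (hα : rnk α = q) (hβ : rnk β = q)
    (hH : greenH (pmul (n := n)) α β) (γ : PM n) :
    ((rnk (pmul α γ) = q ↔ rnk (pmul β γ) = q) ∧
      (rnk (pmul α γ) = q →
        (nuRel q N α β ↔ nuRel q N (pmul α γ) (pmul β γ)))) ∧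
    ((rnk (pmul γ α) = q ↔ rnk (pmul γ β) = q) ∧
      (rnk (pmul γ α) = q →
        (nuRel q N α β ↔ nuRel q N (pmul γ α) (pmul γ β)))) :=
  nu_compatibility_general n q N α β hα hβ hH γ

end TPM
end

section
/- Let n ≥ 1, let σ be a congruence on P_n^Φ, and let i ∈ ℕ. Then the relation σ_{0i} := {(α,β) ∈ D_0 × D_0 : ((i,α),(i,β)) ∈ σ} is one of the following four relations: the equality relation on D_0; the restriction of Green's relation L of P_n to D_0; the restriction of Green's relation R of P_n to D_0; or the full relation D_0 × D_0. -/
namespace TPM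

variable {n : ℕ}

section Aux
variable {n : ℕ}

lemma eqvGen_le {X : Type*} {r E : X → X → Prop} (hE : Equivalence E)
    (h : ∀ a b, r a b → E a b) : ∀ a b, Relation.EqvGen r a b → E a b := by
  intro a b hab
  induction hab with
  | rel x y hxy => exact h _ _ hxy
  | refl x => exact hE.refl x
  | symm x y _ ih => exact hE.symm ih
  | trans x y z _ _ ih1 ih2 => exact hE.trans ih1 ih2

lemma eqvGen_eq {X : Type*} {r : X → X → Prop} (h : ∀ a b, r a b → a = b) :
    ∀ a b, Relation.EqvGen r a b → a = b := eqvGen_le eq_equivalence h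

/-- the discrete setoid -/
def dEq : Setoid (Fin n) := ⟨Eq, eq_equivalence⟩

def topS (α : PM n) : Setoid (Fin n) :=
  ⟨fun u v => α.r (Sum.inl u) (Sum.inl v),
   ⟨fun _ => α.iseqv.refl _, fun h => α.iseqv.symm h, fun h h' => α.iseqv.trans h h'⟩⟩

def botS (α : PM n) : Setoid (Fin n) :=
  ⟨fun u v => α.r (Sum.inr u) (Sum.inr v),
   ⟨fun _ => α.iseqv.refl _, fun h => α.iseqv.symm h, fun h h' => α.iseqv.trans h h'⟩⟩

def pm0r (U L : Setoid (Fin n)) : V n → V n → Prop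
  | Sum.inl u, Sum.inl v => U.r u v
  | Sum.inr u, Sum.inr v => L.r u v
  | _, _ => False

/-- the rank-0 partition with top part `U` and bottom part `L` -/
def pm0 (U L : Setoid (Fin n)) : PM n :=
  ⟨pm0r U L, by
    constructor
    · rintro (u | u)
      · exact U.iseqv.refl u
      · exact L.iseqv.refl u
    · rintro (u | u) (v | v) h <;> simp only [pm0r] at h ⊢
      · exact U.iseqv.symm h
      · exact L.iseqv.symm h
    · rintro (u | u) (v | v) (w | w) h h' <;> simp only [pm0r] at h h' ⊢
      · exact U.iseqv.trans h h'
      · exact L.iseqv.trans h h'⟩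

@[simp] lemma pm0_inl_inl {U L : Setoid (Fin n)} {u v : Fin n} :
    (pm0 U L).r (Sum.inl u) (Sum.inl v) ↔ U.r u v := Iff.rfl

@[simp] lemma pm0_inr_inr {U L : Setoid (Fin n)} {u v : Fin n} :
    (pm0 U L).r (Sum.inr u) (Sum.inr v) ↔ L.r u v := Iff.rfl

@[simp] lemma pm0_inl_inr {U L : Setoid (Fin n)} {u v : Fin n} :
    ¬ (pm0 U L).r (Sum.inl u) (Sum.inr v) := fun h => h

@[simp] lemma pm0_inr_inl {U L : Setoid (Fin n)} {u v : Fin n} :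
    ¬ (pm0 U L).r (Sum.inr u) (Sum.inl v) := fun h => h

@[simp] lemma topS_pm0 {U L : Setoid (Fin n)} : topS (pm0 U L) = U :=
  Setoid.ext fun _ _ => Iff.rfl

@[simp] lemma botS_pm0 {U L : Setoid (Fin n)} : botS (pm0 U L) = L :=
  Setoid.ext fun _ _ => Iff.rfl

/-- rank zero iff no transversal pair -/
lemma rnk_eq_zero_iff (α : PM n) :
    rnk α = 0 ↔ ∀ p q : Fin n, ¬ α.r (Sum.inl p) (Sum.inr q) := by
  constructor
  · intro h p q hpq
    rw [rnk] at h
    rcases Nat.card_eq_zero.mp h with h' | h'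
    · exact h'.elim ⟨Quotient.mk α (Sum.inl p), ⟨p, rfl⟩,
        ⟨q, Quot.sound (α.iseqv.symm hpq)⟩⟩
    · exact absurd h' (by
        have : Finite (Quotient α) := Quotient.finite α
        exact not_infinite_iff_finite.mpr inferInstance)
  · intro h
    rw [rnk]
    refine Nat.card_eq_zero.mpr (Or.inl ?_)
    constructor
    rintro ⟨c, ⟨p, hp⟩, ⟨q, hq⟩⟩
    exact h p q (Quotient.exact (hp.trans hq.symm))

lemma rnk_pm0 {U L : Setoid (Fin n)} : rnk (pm0 U L) = 0 :=
  (rnk_eq_zero_iff _).mpr fun _ _ h => h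

lemma pm0_eta {α : PM n} (h : rnk α = 0) : pm0 (topS α) (botS α) = α := by
  have h' := (rnk_eq_zero_iff α).mp h
  apply Setoid.ext
  rintro (u | u) (v | v)
  · exact Iff.rfl
  · exact iff_of_false (pm0_inl_inr) (h' u v)
  · exact iff_of_false (pm0_inr_inl) (fun hr => h' v u (α.iseqv.symm hr))
  · exact Iff.rfl

end Aux
section Masters
variable {n : ℕ}

def gen (R : Fin n → Fin n → Prop) (f : Fin n → Fin n) : Fin n → Fin n → Prop :=
  fun l l' => ∃ p q, R p q ∧ f p = l ∧ f q = l'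

def pushS (R : Setoid (Fin n)) (f g : Fin n → Fin n) : Setoid (Fin n) :=
  ⟨fun u v => Relation.EqvGen (gen R.r f) (g u) (g v),
   ⟨fun _ => Relation.EqvGen.refl _, fun h => Relation.EqvGen.symm _ _ h,
    fun h h' => Relation.EqvGen.trans _ _ _ h h'⟩⟩

@[simp] lemma pushS_r {R : Setoid (Fin n)} {f g : Fin n → Fin n} {u v : Fin n} :
    (pushS R f g).r u v ↔ Relation.EqvGen (gen R.r f) (g u) (g v) := Iff.rfl

def hOf (g f : Fin n → Fin n) : V n → Fin n := Sum.elim g f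

def labL (g f : Fin n → Fin n) : W n → Fin n ⊕ Fin n
  | Sum.inl x => Sum.inl (g x)
  | Sum.inr (Sum.inl u) => Sum.inl (f u)
  | Sum.inr (Sum.inr y) => Sum.inr y

def labR (f g : Fin n → Fin n) : W n → Fin n ⊕ Fin n
  | Sum.inl x => Sum.inr x
  | Sum.inr (Sum.inl u) => Sum.inl (f u)
  | Sum.inr (Sum.inr y) => Sum.inl (g y)

def ssL (R : Fin n → Fin n → Prop) (f : Fin n → Fin n) (B : Fin n → Fin n → Prop) :
    (Fin n ⊕ Fin n) → (Fin n ⊕ Fin n) → Prop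
  | Sum.inl l, Sum.inl l' => Relation.EqvGen (gen R f) l l'
  | Sum.inr y, Sum.inr z => B y z
  | _, _ => False

lemma ssL_equiv (R : Fin n → Fin n → Prop) (f : Fin n → Fin n) (B : Fin n → Fin n → Prop)
    (hB : Equivalence B) : Equivalence (ssL R f B) := by
  constructor
  · rintro (l | y)
    · exact Relation.EqvGen.refl _
    · exact hB.refl y
  · rintro (l | y) (l' | z) h <;> simp only [ssL] at h ⊢
    · exact Relation.EqvGen.symm _ _ h
    · exact hB.symm h
  · rintro (l | y) (l' | z) (l'' | w) h h' <;> simp only [ssL] at h h' ⊢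
    · exact Relation.EqvGen.trans _ _ _ h h'
    · exact hB.trans h h'

lemma left_master (g f : Fin n → Fin n) (hatt : ∀ u, ∃ x, f u = g x)
    (γ : PM n) (hγ : ∀ p q : Fin n, ¬ γ.r (Sum.inl p) (Sum.inr q)) :
    Phi (Setoid.ker (hOf g f)) γ = 0 ∧
      pmul (Setoid.ker (hOf g f)) γ = pm0 (pushS (topS γ) f g) (botS γ) := by
  set a := Setoid.ker (hOf g f) with ha
  set R := (topS γ).r with hR
  set B : Fin n → Fin n → Prop := fun y z => γ.r (Sum.inr y) (Sum.inr z) with hB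
  have hBe : Equivalence B :=
    ⟨fun y => γ.iseqv.refl _, fun h => γ.iseqv.symm h, fun h h' => γ.iseqv.trans h h'⟩
  have hSe : Equivalence (ssL R f B) := ssL_equiv R f B hBe
  have hsub : ∀ w w', graphRel a γ w w' → ssL R f B (labL g f w) (labL g f w') := by
    rintro w w' (⟨u, v, huv, rfl, rfl⟩ | ⟨u, v, huv, rfl, rfl⟩)
    · rcases u with x | x <;> rcases v with y | y
      · show Relation.EqvGen (gen R f) (g x) (g y)
        exact (show g x = g y from huv) ▸ Relation.EqvGen.refl _
      · show Relation.EqvGen (gen R f) (g x) (f y)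
        exact (show g x = f y from huv) ▸ Relation.EqvGen.refl _
      · show Relation.EqvGen (gen R f) (f x) (g y)
        exact (show f x = g y from huv) ▸ Relation.EqvGen.refl _
      · show Relation.EqvGen (gen R f) (f x) (f y)
        exact (show f x = f y from huv) ▸ Relation.EqvGen.refl _
    · rcases u with p | p <;> rcases v with q | q
      · exact Relation.EqvGen.rel _ _ ⟨p, q, huv, rfl, rfl⟩
      · exact absurd huv (hγ p q)
      · exact absurd (γ.iseqv.symm huv) (hγ q p)
      · exact huv
  have hconn : ∀ w w', conn a γ w w' → ssL R f B (labL g f w) (labL g f w') := by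
    intro w w' h
    induction h with
    | rel x y hxy => exact hsub _ _ hxy
    | refl x => exact hSe.refl _
    | symm x y _ ih => exact hSe.symm ih
    | trans x y z _ _ ih1 ih2 => exact hSe.trans ih1 ih2
  have key : ∀ l l', Relation.EqvGen (gen R f) l l' →
      l = l' ∨ ∃ p q, f p = l ∧ f q = l' ∧
        conn a γ (Sum.inr (Sum.inl p)) (Sum.inr (Sum.inl q)) := by
    intro l l' h
    induction h with
    | rel x y hxy =>
      obtain ⟨p, q, hpq, hp, hq⟩ := hxy
      exact Or.inr ⟨p, q, hp, hq,
        Relation.EqvGen.rel _ _ (Or.inr ⟨Sum.inl p, Sum.inl q, hpq, rfl, rfl⟩)⟩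
    | refl x => exact Or.inl rfl
    | symm x y _ ih =>
      rcases ih with rfl | ⟨p, q, hp, hq, hc⟩
      · exact Or.inl rfl
      · exact Or.inr ⟨q, p, hq, hp, Relation.EqvGen.symm _ _ hc⟩
    | trans x y z _ _ ih1 ih2 =>
      rcases ih1 with rfl | ⟨p, q, hp, hq, hc⟩
      · exact ih2
      rcases ih2 with rfl | ⟨p', q', hp', hq', hc'⟩
      · exact Or.inr ⟨p, q, hp, hq, hc⟩
      · refine Or.inr ⟨p, q', hp, hq', ?_⟩
        have e : (Setoid.ker (hOf g f)).r (Sum.inr q) (Sum.inr p') := by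
          show f q = f p'
          rw [hq, hp']
        have edge : conn a γ (Sum.inr (Sum.inl q)) (Sum.inr (Sum.inl p')) :=
          Relation.EqvGen.rel _ _ (Or.inl ⟨Sum.inr q, Sum.inr p', e, rfl, rfl⟩)
        exact Relation.EqvGen.trans _ _ _ hc (Relation.EqvGen.trans _ _ _ edge hc')
  have topconn : ∀ x y : Fin n, Relation.EqvGen (gen R f) (g x) (g y) →
      conn a γ (Sum.inl x) (Sum.inl y) := by
    intro x y h
    rcases key _ _ h with e | ⟨p, q, hp, hq, hc⟩
    · exact Relation.EqvGen.rel _ _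
        (Or.inl ⟨Sum.inl x, Sum.inl y, (e : hOf g f (Sum.inl x) = hOf g f (Sum.inl y)), rfl, rfl⟩)
    · have e1 : conn a γ (Sum.inl x) (Sum.inr (Sum.inl p)) :=
        Relation.EqvGen.rel _ _
          (Or.inl ⟨Sum.inl x, Sum.inr p, (hp.symm : hOf g f (Sum.inl x) = hOf g f (Sum.inr p)), rfl, rfl⟩)
      have e2 : conn a γ (Sum.inr (Sum.inl q)) (Sum.inl y) :=
        Relation.EqvGen.rel _ _
          (Or.inl ⟨Sum.inr q, Sum.inl y, (hq : hOf g f (Sum.inr q) = hOf g f (Sum.inl y)), rfl, rfl⟩)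
      exact Relation.EqvGen.trans _ _ _ e1 (Relation.EqvGen.trans _ _ _ hc e2)
  constructor
  · rw [Phi]
    refine Nat.card_eq_zero.mpr (Or.inl ?_)
    constructor
    rintro ⟨c, hc⟩
    obtain ⟨w, rfl⟩ := Quotient.exists_rep c
    rcases w with x | u | y
    · exact absurd (hc _ rfl) (by simp [isMid])
    · obtain ⟨x, hx⟩ := hatt u
      have e : conn a γ (Sum.inl x) (Sum.inr (Sum.inl u)) :=
        Relation.EqvGen.rel _ _
          (Or.inl ⟨Sum.inl x, Sum.inr u, (hx.symm : hOf g f (Sum.inl x) = hOf g f (Sum.inr u)), rfl, rfl⟩)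
      have hq : Quotient.mk (connSetoid a γ) (Sum.inl x) = Quotient.mk (connSetoid a γ) (Sum.inr (Sum.inl u)) :=
        Quot.sound e
      exact absurd (hc _ hq) (by simp [isMid])
    · exact absurd (hc _ rfl) (by simp [isMid])
  · apply Setoid.ext
    rintro (u | u) (v | v)
    · exact ⟨fun h => hconn _ _ h, fun h => topconn u v h⟩
    · exact ⟨fun h => (hconn _ _ h).elim, fun h => (pm0_inl_inr h).elim⟩
    · exact ⟨fun h => (hconn _ _ h).elim, fun h => (pm0_inr_inl h).elim⟩
    · exact ⟨fun h => hconn _ _ h,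
        fun h => Relation.EqvGen.rel _ _ (Or.inr ⟨Sum.inr u, Sum.inr v, h, rfl, rfl⟩)⟩

lemma right_master (f g : Fin n → Fin n) (hatt : ∀ u, ∃ y, f u = g y)
    (γ : PM n) (hγ : ∀ p q : Fin n, ¬ γ.r (Sum.inl p) (Sum.inr q)) :
    Phi γ (Setoid.ker (hOf f g)) = 0 ∧
      pmul γ (Setoid.ker (hOf f g)) = pm0 (topS γ) (pushS (botS γ) f g) := by
  set b := Setoid.ker (hOf f g) with hb
  set R := (botS γ).r with hR
  set B : Fin n → Fin n → Prop := fun x y => γ.r (Sum.inl x) (Sum.inl y) with hB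
  have hBe : Equivalence B :=
    ⟨fun y => γ.iseqv.refl _, fun h => γ.iseqv.symm h, fun h h' => γ.iseqv.trans h h'⟩
  have hSe : Equivalence (ssL R f B) := ssL_equiv R f B hBe
  have hsub : ∀ w w', graphRel γ b w w' → ssL R f B (labR f g w) (labR f g w') := by
    rintro w w' (⟨u, v, huv, rfl, rfl⟩ | ⟨u, v, huv, rfl, rfl⟩)
    · rcases u with p | p <;> rcases v with q | q
      · exact huv
      · exact absurd huv (hγ p q)
      · exact absurd (γ.iseqv.symm huv) (hγ q p)
      · exact Relation.EqvGen.rel _ _ ⟨p, q, huv, rfl, rfl⟩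
    · rcases u with x | x <;> rcases v with y | y
      · show Relation.EqvGen (gen R f) (f x) (f y)
        exact (show f x = f y from huv) ▸ Relation.EqvGen.refl _
      · show Relation.EqvGen (gen R f) (f x) (g y)
        exact (show f x = g y from huv) ▸ Relation.EqvGen.refl _
      · show Relation.EqvGen (gen R f) (g x) (f y)
        exact (show g x = f y from huv) ▸ Relation.EqvGen.refl _
      · show Relation.EqvGen (gen R f) (g x) (g y)
        exact (show g x = g y from huv) ▸ Relation.EqvGen.refl _
  have hconn : ∀ w w', conn γ b w w' → ssL R f B (labR f g w) (labR f g w') := by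
    intro w w' h
    induction h with
    | rel x y hxy => exact hsub _ _ hxy
    | refl x => exact hSe.refl _
    | symm x y _ ih => exact hSe.symm ih
    | trans x y z _ _ ih1 ih2 => exact hSe.trans ih1 ih2
  have key : ∀ l l', Relation.EqvGen (gen R f) l l' →
      l = l' ∨ ∃ p q, f p = l ∧ f q = l' ∧
        conn γ b (Sum.inr (Sum.inl p)) (Sum.inr (Sum.inl q)) := by
    intro l l' h
    induction h with
    | rel x y hxy =>
      obtain ⟨p, q, hpq, hp, hq⟩ := hxy
      exact Or.inr ⟨p, q, hp, hq,
        Relation.EqvGen.rel _ _ (Or.inl ⟨Sum.inr p, Sum.inr q, hpq, rfl, rfl⟩)⟩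
    | refl x => exact Or.inl rfl
    | symm x y _ ih =>
      rcases ih with rfl | ⟨p, q, hp, hq, hc⟩
      · exact Or.inl rfl
      · exact Or.inr ⟨q, p, hq, hp, Relation.EqvGen.symm _ _ hc⟩
    | trans x y z _ _ ih1 ih2 =>
      rcases ih1 with rfl | ⟨p, q, hp, hq, hc⟩
      · exact ih2
      rcases ih2 with rfl | ⟨p', q', hp', hq', hc'⟩
      · exact Or.inr ⟨p, q, hp, hq, hc⟩
      · refine Or.inr ⟨p, q', hp, hq', ?_⟩
        have e : (Setoid.ker (hOf f g)).r (Sum.inl q) (Sum.inl p') := by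
          show f q = f p'
          rw [hq, hp']
        have edge : conn γ b (Sum.inr (Sum.inl q)) (Sum.inr (Sum.inl p')) :=
          Relation.EqvGen.rel _ _ (Or.inr ⟨Sum.inl q, Sum.inl p', e, rfl, rfl⟩)
        exact Relation.EqvGen.trans _ _ _ hc (Relation.EqvGen.trans _ _ _ edge hc')
  have botconn : ∀ x y : Fin n, Relation.EqvGen (gen R f) (g x) (g y) →
      conn γ b (Sum.inr (Sum.inr x)) (Sum.inr (Sum.inr y)) := by
    intro x y h
    rcases key _ _ h with e | ⟨p, q, hp, hq, hc⟩
    · exact Relation.EqvGen.rel _ _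
        (Or.inr ⟨Sum.inr x, Sum.inr y, (e : hOf f g (Sum.inr x) = hOf f g (Sum.inr y)), rfl, rfl⟩)
    · have e1 : conn γ b (Sum.inr (Sum.inr x)) (Sum.inr (Sum.inl p)) :=
        Relation.EqvGen.rel _ _
          (Or.inr ⟨Sum.inr x, Sum.inl p, (hp.symm : hOf f g (Sum.inr x) = hOf f g (Sum.inl p)), rfl, rfl⟩)
      have e2 : conn γ b (Sum.inr (Sum.inl q)) (Sum.inr (Sum.inr y)) :=
        Relation.EqvGen.rel _ _
          (Or.inr ⟨Sum.inl q, Sum.inr y, (hq : hOf f g (Sum.inl q) = hOf f g (Sum.inr y)), rfl, rfl⟩)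
      exact Relation.EqvGen.trans _ _ _ e1 (Relation.EqvGen.trans _ _ _ hc e2)
  constructor
  · rw [Phi]
    refine Nat.card_eq_zero.mpr (Or.inl ?_)
    constructor
    rintro ⟨c, hc⟩
    obtain ⟨w, rfl⟩ := Quotient.exists_rep c
    rcases w with x | u | y
    · exact absurd (hc _ rfl) (by simp [isMid])
    · obtain ⟨y, hy⟩ := hatt u
      have e : conn γ b (Sum.inr (Sum.inl u)) (Sum.inr (Sum.inr y)) :=
        Relation.EqvGen.rel _ _
          (Or.inr ⟨Sum.inl u, Sum.inr y, (hy : hOf f g (Sum.inl u) = hOf f g (Sum.inr y)), rfl, rfl⟩)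
      have hq : Quotient.mk (connSetoid γ b) (Sum.inr (Sum.inr y)) = Quotient.mk (connSetoid γ b) (Sum.inr (Sum.inl u)) :=
        (Quot.sound e).symm
      exact absurd (hc _ hq) (by simp [isMid])
    · exact absurd (hc _ rfl) (by simp [isMid])
  · apply Setoid.ext
    rintro (u | u) (v | v)
    · exact ⟨fun h => hconn _ _ h,
        fun h => Relation.EqvGen.rel _ _ (Or.inl ⟨Sum.inl u, Sum.inl v, h, rfl, rfl⟩)⟩
    · exact ⟨fun h => (hconn _ _ h).elim, fun h => (pm0_inl_inr h).elim⟩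
    · exact ⟨fun h => (hconn _ _ h).elim, fun h => (pm0_inr_inl h).elim⟩
    · exact ⟨fun h => hconn _ _ h, fun h => botconn u v h⟩

end Masters
section Tools
variable {n : ℕ}

noncomputable def rep (A : Setoid (Fin n)) (u : Fin n) : Fin n :=
  Quotient.out (Quotient.mk A u)

lemma rep_rel (A : Setoid (Fin n)) (u : Fin n) : A.r (rep A u) u :=
  Quotient.exact (Quotient.out_eq _)

lemma rep_eq_iff {A : Setoid (Fin n)} {u v : Fin n} : rep A u = rep A v ↔ A.r u v := by
  constructor
  · intro h
    exact A.iseqv.trans (A.iseqv.symm (rep_rel A u)) (h ▸ rep_rel A v)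
  · intro h
    exact congrArg Quotient.out (Quot.sound h)

lemma pushS_const_iff {R : Setoid (Fin n)} {f g : Fin n → Fin n}
    (hRf : ∀ p q, R.r p q → f p = f q) {u v : Fin n} :
    (pushS R f g).r u v ↔ g u = g v := by
  constructor
  · intro h
    exact eqvGen_eq (fun l l' => by rintro ⟨p, q, hpq, rfl, rfl⟩; exact hRf p q hpq) _ _ h
  · intro h
    show Relation.EqvGen (gen R.r f) (g u) (g v)
    exact h ▸ Relation.EqvGen.refl _

lemma pushS_const_id {R : Setoid (Fin n)} {f : Fin n → Fin n}
    (hRf : ∀ p q, R.r p q → f p = f q) : pushS R f id = dEq :=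
  Setoid.ext fun u v => pushS_const_iff hRf

lemma pushS_dEq_rep {L : Setoid (Fin n)} {f : Fin n → Fin n} :
    pushS dEq f (rep L) = L :=
  Setoid.ext fun u v =>
    (pushS_const_iff (fun p q h => by cases (h : p = q); rfl)).trans rep_eq_iff

def optRel (B : Fin n → Fin n → Prop) : Option (Fin n) → Option (Fin n) → Prop
  | some y, some z => B y z
  | none, none => True
  | _, _ => False

lemma optRel_equiv {B : Fin n → Fin n → Prop} (hB : Equivalence B) :
    Equivalence (optRel B) := by
  constructor
  · rintro (_ | y)
    · trivial
    · exact hB.refl y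
  · rintro (_ | y) (_ | z) h <;> simp only [optRel] at h ⊢
    · exact hB.symm h
  · rintro (_ | y) (_ | z) (_ | w) h h' <;> simp only [optRel] at h h' ⊢
    · exact hB.trans h h'

def labBot : W n → Option (Fin n)
  | Sum.inr (Sum.inr y) => some y
  | _ => none

def labTop : W n → Option (Fin n)
  | Sum.inl x => some x
  | _ => none

lemma pmul_bot (a γ : PM n) (hγ : ∀ p q : Fin n, ¬ γ.r (Sum.inl p) (Sum.inr q)) :
    (∀ x y : Fin n, ¬ (pmul a γ).r (Sum.inl x) (Sum.inr y)) ∧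
    (∀ y z : Fin n, (pmul a γ).r (Sum.inr y) (Sum.inr z) ↔ γ.r (Sum.inr y) (Sum.inr z)) := by
  set B : Fin n → Fin n → Prop := fun y z => γ.r (Sum.inr y) (Sum.inr z) with hB
  have hBe : Equivalence B :=
    ⟨fun y => γ.iseqv.refl _, fun h => γ.iseqv.symm h, fun h h' => γ.iseqv.trans h h'⟩
  have hsub : ∀ w w', graphRel a γ w w' → optRel B (labBot w) (labBot w') := by
    rintro w w' (⟨u, v, huv, rfl, rfl⟩ | ⟨u, v, huv, rfl, rfl⟩)
    · rcases u with x | x <;> rcases v with y | y <;> trivial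
    · rcases u with p | p <;> rcases v with q | q
      · trivial
      · exact absurd huv (hγ p q)
      · exact absurd (γ.iseqv.symm huv) (hγ q p)
      · exact huv
  have hconn : ∀ w w', conn a γ w w' → optRel B (labBot w) (labBot w') := by
    intro w w' h
    induction h with
    | rel x y hxy => exact hsub _ _ hxy
    | refl x => exact (optRel_equiv hBe).refl _
    | symm x y _ ih => exact (optRel_equiv hBe).symm ih
    | trans x y z _ _ ih1 ih2 => exact (optRel_equiv hBe).trans ih1 ih2
  constructor
  · intro x y h
    exact (hconn _ _ h).elim
  · intro y z
    constructor
    · intro h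
      exact hconn _ _ h
    · intro h
      exact Relation.EqvGen.rel _ _ (Or.inr ⟨Sum.inr y, Sum.inr z, h, rfl, rfl⟩)

lemma pmul_top (a γ : PM n) (ha : ∀ p q : Fin n, ¬ a.r (Sum.inl p) (Sum.inr q)) :
    (∀ x y : Fin n, ¬ (pmul a γ).r (Sum.inl x) (Sum.inr y)) ∧
    (∀ x y : Fin n, (pmul a γ).r (Sum.inl x) (Sum.inl y) ↔ a.r (Sum.inl x) (Sum.inl y)) := by
  set B : Fin n → Fin n → Prop := fun x y => a.r (Sum.inl x) (Sum.inl y) with hB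
  have hBe : Equivalence B :=
    ⟨fun y => a.iseqv.refl _, fun h => a.iseqv.symm h, fun h h' => a.iseqv.trans h h'⟩
  have hsub : ∀ w w', graphRel a γ w w' → optRel B (labTop w) (labTop w') := by
    rintro w w' (⟨u, v, huv, rfl, rfl⟩ | ⟨u, v, huv, rfl, rfl⟩)
    · rcases u with x | x <;> rcases v with y | y
      · exact huv
      · exact absurd huv (ha x y)
      · exact absurd (a.iseqv.symm huv) (ha y x)
      · trivial
    · rcases u with p | p <;> rcases v with q | q <;> trivial
  have hconn : ∀ w w', conn a γ w w' → optRel B (labTop w) (labTop w') := by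
    intro w w' h
    induction h with
    | rel x y hxy => exact hsub _ _ hxy
    | refl x => exact (optRel_equiv hBe).refl _
    | symm x y _ ih => exact (optRel_equiv hBe).symm ih
    | trans x y z _ _ ih1 ih2 => exact (optRel_equiv hBe).trans ih1 ih2
  constructor
  · intro x y h
    exact (hconn _ _ h).elim
  · intro x y
    constructor
    · intro h
      exact hconn _ _ h
    · intro h
      exact Relation.EqvGen.rel _ _ (Or.inl ⟨Sum.inl x, Sum.inl y, h, rfl, rfl⟩)

lemma pmul_rank0 {α β : PM n} (hα : rnk α = 0) (hβ : rnk β = 0) :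
    pmul α β = pm0 (topS α) (botS β) := by
  have hα' := (rnk_eq_zero_iff α).mp hα
  have hβ' := (rnk_eq_zero_iff β).mp hβ
  apply Setoid.ext
  rintro (u | u) (v | v)
  · exact (pmul_top α β hα').2 u v
  · exact iff_of_false ((pmul_top α β hα').1 u v) pm0_inl_inr
  · exact iff_of_false (fun h => (pmul_top α β hα').1 v u ((pmul α β).iseqv.symm h)) pm0_inr_inl
  · exact (pmul_bot α β hβ').2 u v

lemma rnk_pmul_left {α β : PM n} (hα : rnk α = 0) : rnk (pmul α β) = 0 :=
  (rnk_eq_zero_iff _).mpr (pmul_top α β ((rnk_eq_zero_iff α).mp hα)).1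

lemma rnk_pmul_right {α β : PM n} (hβ : rnk β = 0) : rnk (pmul α β) = 0 :=
  (rnk_eq_zero_iff _).mpr (pmul_bot α β ((rnk_eq_zero_iff β).mp hβ)).1

lemma topS_pmul {α β : PM n} (hα : rnk α = 0) : topS (pmul α β) = topS α :=
  Setoid.ext fun u v => (pmul_top α β ((rnk_eq_zero_iff α).mp hα)).2 u v

lemma botS_pmul {α β : PM n} (hβ : rnk β = 0) : botS (pmul α β) = botS β :=
  Setoid.ext fun u v => (pmul_bot α β ((rnk_eq_zero_iff β).mp hβ)).2 u v

lemma greenR_iff (hn : 1 ≤ n) {α β : PM n} (hα : rnk α = 0) (hβ : rnk β = 0) :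
    greenR (pmul (n := n)) α β ↔ topS α = topS β := by
  have hrange : ∀ δ : PM n, rnk δ = 0 →
      Set.range (pmul δ) = {ε : PM n | rnk ε = 0 ∧ topS ε = topS δ} := by
    intro δ hδ
    apply Set.eq_of_subset_of_subset
    · rintro ε ⟨γ, rfl⟩
      exact ⟨rnk_pmul_left hδ, topS_pmul hδ⟩
    · rintro ε ⟨h0, ht⟩
      refine ⟨pm0 (topS ε) (botS ε), ?_⟩
      rw [pmul_rank0 hδ rnk_pm0, botS_pm0, ← ht, pm0_eta h0]
  constructor
  · intro h
    have hm : α ∈ Set.range (pmul α) := ⟨α, by rw [pmul_rank0 hα hα, pm0_eta hα]⟩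
    rw [greenR] at h
    rw [h, hrange β hβ] at hm
    exact hm.2
  · intro h
    rw [greenR, hrange α hα, hrange β hβ, h]

lemma greenL_iff (hn : 1 ≤ n) {α β : PM n} (hα : rnk α = 0) (hβ : rnk β = 0) :
    greenL (pmul (n := n)) α β ↔ botS α = botS β := by
  have c0 : Fin n := ⟨0, hn⟩
  have hrange : ∀ δ : PM n, rnk δ = 0 →
      Set.range (fun a => pmul a δ) = {ε : PM n | rnk ε = 0 ∧ botS ε = botS δ} := by
    intro δ hδ
    apply Set.eq_of_subset_of_subset
    · rintro ε ⟨γ, rfl⟩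
      exact ⟨rnk_pmul_right hδ, botS_pmul hδ⟩
    · rintro ε ⟨h0, hb⟩
      refine ⟨Setoid.ker (hOf (rep (topS ε)) (fun _ => rep (topS ε) c0)), ?_⟩
      have := (left_master (rep (topS ε)) (fun _ => rep (topS ε) c0)
        (fun _ => ⟨c0, rfl⟩) δ ((rnk_eq_zero_iff δ).mp hδ)).2
      dsimp only
      rw [this]
      rw [show pushS (topS δ) (fun _ => rep (topS ε) c0) (rep (topS ε)) = topS ε from
        Setoid.ext fun u v => (pushS_const_iff (R := topS δ)
          (f := fun _ => rep (topS ε) c0) (g := rep (topS ε))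
          (fun _ _ _ => rfl)).trans rep_eq_iff]
      rw [← hb, pm0_eta h0]
  constructor
  · intro h
    have hm : α ∈ Set.range (fun a => pmul a α) := ⟨α, by
      show pmul α α = α
      rw [pmul_rank0 hα hα, pm0_eta hα]⟩
    rw [greenL] at h
    rw [h, hrange β hβ] at hm
    exact hm.2
  · intro h
    rw [greenL, hrange α hα, hrange β hβ, h]

end Tools
section Generate
variable {n : ℕ}

def joinS (A : Setoid (Fin n)) (a b : Fin n) : Setoid (Fin n) :=
  ⟨fun u v => A.r u v ∨ (A.r u a ∧ A.r v b) ∨ (A.r u b ∧ A.r v a), by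
    constructor
    · intro u
      exact Or.inl (A.iseqv.refl u)
    · rintro u v (h | ⟨h1, h2⟩ | ⟨h1, h2⟩)
      · exact Or.inl (A.iseqv.symm h)
      · exact Or.inr (Or.inr ⟨h2, h1⟩)
      · exact Or.inr (Or.inl ⟨h2, h1⟩)
    · rintro u v w (h | ⟨h1, h2⟩ | ⟨h1, h2⟩) (h' | ⟨h1', h2'⟩ | ⟨h1', h2'⟩)
      · exact Or.inl (A.iseqv.trans h h')
      · exact Or.inr (Or.inl ⟨A.iseqv.trans h h1', h2'⟩)
      · exact Or.inr (Or.inr ⟨A.iseqv.trans h h1', h2'⟩)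
      · exact Or.inr (Or.inl ⟨h1, A.iseqv.trans (A.iseqv.symm h') h2⟩)
      · exact Or.inr (Or.inl ⟨h1, h2'⟩)
      · exact Or.inl (A.iseqv.trans h1 (A.iseqv.symm h2'))
      · exact Or.inr (Or.inr ⟨h1, A.iseqv.trans (A.iseqv.symm h') h2⟩)
      · exact Or.inl (A.iseqv.trans h1 (A.iseqv.symm h2'))
      · exact Or.inr (Or.inr ⟨h1, h2'⟩)⟩

def splitS (U : Setoid (Fin n)) (a : Fin n) : Setoid (Fin n) :=
  ⟨fun u v => U.r u v ∧ (u = a ↔ v = a), by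
    constructor
    · intro u
      exact ⟨U.iseqv.refl u, Iff.rfl⟩
    · rintro u v ⟨h1, h2⟩
      exact ⟨U.iseqv.symm h1, h2.symm⟩
    · rintro u v w ⟨h1, h2⟩ ⟨h1', h2'⟩
      exact ⟨U.iseqv.trans h1 h1', h2.trans h2'⟩⟩

lemma joinS_split (U : Setoid (Fin n)) (a b : Fin n) (hab : U.r a b) (hne : a ≠ b) :
    joinS (splitS U a) a b = U := by
  apply Setoid.ext
  intro u v
  constructor
  · rintro (⟨h, _⟩ | ⟨⟨h1, _⟩, ⟨h2, _⟩⟩ | ⟨⟨h1, _⟩, ⟨h2, _⟩⟩)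
    · exact h
    · exact U.iseqv.trans h1 (U.iseqv.trans hab (U.iseqv.symm h2))
    · exact U.iseqv.trans h1 (U.iseqv.trans (U.iseqv.symm hab) (U.iseqv.symm h2))
  · intro h
    by_cases hu : u = a <;> by_cases hv : v = a
    · exact Or.inl ⟨h, by simp [hu, hv]⟩
    · refine Or.inr (Or.inl ⟨⟨hu ▸ U.iseqv.refl u, by simp [hu]⟩, ?_⟩)
      refine ⟨U.iseqv.trans (U.iseqv.symm h) (hu ▸ hab), iff_of_false hv (Ne.symm hne)⟩
    · refine Or.inr (Or.inr ⟨⟨U.iseqv.trans h (hv ▸ hab), iff_of_false hu (Ne.symm hne)⟩, ?_⟩)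
      exact ⟨hv ▸ U.iseqv.refl v, by simp [hv]⟩
    · exact Or.inl ⟨h, iff_of_false hu hv⟩

lemma generate (t : Setoid (Fin n) → Setoid (Fin n) → Prop)
    (htr : ∀ A B C, t A B → t B C → t A C)
    (hrefl : t dEq dEq)
    (hstep : ∀ (A : Setoid (Fin n)) (a b : Fin n), a ≠ b → t (joinS A a b) A) :
    ∀ U, t U dEq := by
  intro U
  generalize hm : Set.ncard {p : Fin n × Fin n | U.r p.1 p.2 ∧ p.1 ≠ p.2} = m
  induction m using Nat.strong_induction_on generalizing U with
  | _ m IH =>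
  by_cases hU : ∀ u v : Fin n, U.r u v → u = v
  · have : U = dEq := Setoid.ext fun u v => ⟨hU u v, fun h => h ▸ U.iseqv.refl u⟩
    rw [this]
    exact hrefl
  · push_neg at hU
    obtain ⟨a, b, hab, hne⟩ := hU
    have hJ : joinS (splitS U a) a b = U := joinS_split U a b hab hne
    have hsubset : {p : Fin n × Fin n | (splitS U a).r p.1 p.2 ∧ p.1 ≠ p.2} ⊆
        {p : Fin n × Fin n | U.r p.1 p.2 ∧ p.1 ≠ p.2} := by
      rintro ⟨u, v⟩ ⟨⟨h, _⟩, hne'⟩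
      exact ⟨h, hne'⟩
    have hmem : ((a, b) : Fin n × Fin n) ∈ {p : Fin n × Fin n | U.r p.1 p.2 ∧ p.1 ≠ p.2} :=
      ⟨hab, hne⟩
    have hnotmem : ((a, b) : Fin n × Fin n) ∉
        {p : Fin n × Fin n | (splitS U a).r p.1 p.2 ∧ p.1 ≠ p.2} := by
      rintro ⟨⟨_, hiff⟩, _⟩
      exact hne.symm (hiff.mp rfl)
    have hlt : Set.ncard {p : Fin n × Fin n | (splitS U a).r p.1 p.2 ∧ p.1 ≠ p.2} < m := by
      rw [← hm]
      exact Set.ncard_lt_ncard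
        ((Set.ssubset_iff_of_subset hsubset).mpr ⟨(a, b), hmem, hnotmem⟩)
        (Set.toFinite _)
    have hst := hstep (splitS U a) a b hne
    rw [hJ] at hst
    exact htr U (splitS U a) dEq hst (IH _ hlt _ rfl)

lemma pushS_join (A : Setoid (Fin n)) (a b : Fin n) (T : Setoid (Fin n)) (x y : Fin n)
    (hxy : T.r x y) (hne : x ≠ y) :
    pushS T (fun p => if p = x then rep A a else if p = y then rep A b else rep A a)
      (rep A) = joinS A a b := by
  apply Setoid.ext
  intro u v
  constructor
  · intro h
    have hE : ∀ l l', Relation.EqvGen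
        (gen T.r (fun p => if p = x then rep A a else if p = y then rep A b else rep A a))
        l l' → (joinS A a b).r l l' := by
      apply eqvGen_le (joinS A a b).iseqv
      rintro l l' ⟨p, q, _, rfl, rfl⟩
      have hv : ∀ r : Fin n,
          (if r = x then rep A a else if r = y then rep A b else rep A a) = rep A a ∨
          (if r = x then rep A a else if r = y then rep A b else rep A a) = rep A b := by
        intro r
        split
        · exact Or.inl rfl
        split
        · exact Or.inr rfl
        · exact Or.inl rfl
      have jab : (joinS A a b).r (rep A a) (rep A b) :=
        Or.inr (Or.inl ⟨rep_rel A a, rep_rel A b⟩)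
      dsimp only
      rcases hv p with hp | hp <;> rcases hv q with hq | hq <;> rw [hp, hq] <;>
        first
          | exact jab
          | exact (joinS A a b).iseqv.symm jab
          | exact (joinS A a b).iseqv.refl _
    have h1 : (joinS A a b).r (rep A u) (rep A v) := hE _ _ h
    have hu : (joinS A a b).r u (rep A u) := Or.inl (A.iseqv.symm (rep_rel A u))
    have hv' : (joinS A a b).r (rep A v) v := Or.inl (rep_rel A v)
    exact (joinS A a b).iseqv.trans hu ((joinS A a b).iseqv.trans h1 hv')
  · intro h
    show Relation.EqvGen
      (gen T.r (fun p => if p = x then rep A a else if p = y then rep A b else rep A a))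
      (rep A u) (rep A v)
    have hgen : Relation.EqvGen
        (gen T.r (fun p => if p = x then rep A a else if p = y then rep A b else rep A a))
        (rep A a) (rep A b) := by
      refine Relation.EqvGen.rel _ _ ⟨x, y, hxy, ?_, ?_⟩
      · simp
      · simp [Ne.symm hne]
    rcases h with hA | ⟨h1, h2⟩ | ⟨h1, h2⟩
    · rw [rep_eq_iff.mpr hA]
      exact Relation.EqvGen.refl _
    · rw [rep_eq_iff.mpr h1, rep_eq_iff.mpr h2]
      exact hgen
    · rw [rep_eq_iff.mpr h1, rep_eq_iff.mpr h2]
      exact Relation.EqvGen.symm _ _ hgen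

end Generate

section Sig
variable {n : ℕ} {σ : (ℕ × PM n) → (ℕ × PM n) → Prop}

lemma sig_left (hσ : IsCongruence (tmul (n := n)) σ) {i : ℕ} {α β : PM n}
    (hα : rnk α = 0) (hβ : rnk β = 0) (hs : σ (i, α) (i, β))
    (g f : Fin n → Fin n) (hatt : ∀ u, ∃ x, f u = g x) :
    σ (i, pm0 (pushS (topS α) f g) (botS α)) (i, pm0 (pushS (topS β) f g) (botS β)) := by
  have h1 := (hσ.2 (i, α) (i, β) (0, Setoid.ker (hOf g f)) hs).1
  obtain ⟨hφa, hpa⟩ := left_master g f hatt α ((rnk_eq_zero_iff α).mp hα)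
  obtain ⟨hφb, hpb⟩ := left_master g f hatt β ((rnk_eq_zero_iff β).mp hβ)
  simpa [tmul, hφa, hφb, hpa, hpb] using h1

lemma sig_right (hσ : IsCongruence (tmul (n := n)) σ) {i : ℕ} {α β : PM n}
    (hα : rnk α = 0) (hβ : rnk β = 0) (hs : σ (i, α) (i, β))
    (f g : Fin n → Fin n) (hatt : ∀ u, ∃ y, f u = g y) :
    σ (i, pm0 (topS α) (pushS (botS α) f g)) (i, pm0 (topS β) (pushS (botS β) f g)) := by
  have h1 := (hσ.2 (i, α) (i, β) (0, Setoid.ker (hOf f g)) hs).2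
  obtain ⟨hφa, hpa⟩ := right_master f g hatt α ((rnk_eq_zero_iff α).mp hα)
  obtain ⟨hφb, hpb⟩ := right_master f g hatt β ((rnk_eq_zero_iff β).mp hβ)
  simpa [tmul, hφa, hφb, hpa, hpb] using h1

lemma sig_left' (hσ : IsCongruence (tmul (n := n)) σ) {i : ℕ}
    {U L U' L' : Setoid (Fin n)} (hs : σ (i, pm0 U L) (i, pm0 U' L'))
    (g f : Fin n → Fin n) (hatt : ∀ u, ∃ x, f u = g x) :
    σ (i, pm0 (pushS U f g) L) (i, pm0 (pushS U' f g) L') := by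
  have := sig_left hσ rnk_pm0 rnk_pm0 hs g f hatt
  simpa using this

lemma sig_right' (hσ : IsCongruence (tmul (n := n)) σ) {i : ℕ}
    {U L U' L' : Setoid (Fin n)} (hs : σ (i, pm0 U L) (i, pm0 U' L'))
    (f g : Fin n → Fin n) (hatt : ∀ u, ∃ y, f u = g y) :
    σ (i, pm0 U (pushS L f g)) (i, pm0 U' (pushS L' f g)) := by
  have := sig_right hσ rnk_pm0 rnk_pm0 hs f g hatt
  simpa using this

end Sig
/-- For a congruence `σ` on `P_n^Φ` and `i ∈ ℕ`, the restriction
`σ_{0i}` to `D_{0i}` is one of: equality on `D_0`, `L↾D_0`, `R↾D_0`, or `D_0 × D_0`. -/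
theorem row0_restrictions (n : ℕ) (hn : 1 ≤ n)
    (σ : (ℕ × PM n) → (ℕ × PM n) → Prop) (hσ : IsCongruence (tmul (n := n)) σ)
    (i : ℕ) (s : PM n → PM n → Prop)
    (hs : s = fun α β => rnk α = 0 ∧ rnk β = 0 ∧ σ (i, α) (i, β)) :
    s = (fun α β => rnk α = 0 ∧ rnk β = 0 ∧ α = β) ∨
    s = (fun α β => rnk α = 0 ∧ rnk β = 0 ∧ greenL (pmul (n := n)) α β) ∨
    s = (fun α β => rnk α = 0 ∧ rnk β = 0 ∧ greenR (pmul (n := n)) α β) ∨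
    s = (fun α β => rnk α = 0 ∧ rnk β = 0) := by
  classical
  subst hs
  set c0 : Fin n := ⟨0, hn⟩ with hc0
  have killTop : ∀ U L U' L' : Setoid (Fin n), σ (i, pm0 U L) (i, pm0 U' L') →
      σ (i, pm0 dEq L) (i, pm0 dEq L') := by
    intro U L U' L' h
    have h2 := sig_left' hσ h id (fun _ => c0) (by intro u; exact ⟨c0, rfl⟩)
    have e1 : pushS U (fun _ => c0) id = dEq := pushS_const_id (fun _ _ _ => rfl)
    have e2 : pushS U' (fun _ => c0) id = dEq := pushS_const_id (fun _ _ _ => rfl)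
    simp only [e1, e2] at h2
    exact h2
  have killBot : ∀ U L U' L' : Setoid (Fin n), σ (i, pm0 U L) (i, pm0 U' L') →
      σ (i, pm0 U dEq) (i, pm0 U' dEq) := by
    intro U L U' L' h
    have h2 := sig_right' hσ h (fun _ => c0) id (by intro u; exact ⟨c0, rfl⟩)
    have e1 : pushS L (fun _ => c0) id = dEq := pushS_const_id (fun _ _ _ => rfl)
    have e2 : pushS L' (fun _ => c0) id = dEq := pushS_const_id (fun _ _ _ => rfl)
    simp only [e1, e2] at h2
    exact h2
  have restoreBot : ∀ U U' L : Setoid (Fin n), σ (i, pm0 U dEq) (i, pm0 U' dEq) →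
      σ (i, pm0 U L) (i, pm0 U' L) := by
    intro U U' L h
    have h2 := sig_right' hσ h (fun _ => rep L c0) (rep L) (by intro u; exact ⟨c0, rfl⟩)
    simp only [pushS_dEq_rep (L := L) (f := fun _ => rep L c0)] at h2
    exact h2
  have restoreTop : ∀ L L' U : Setoid (Fin n), σ (i, pm0 dEq L) (i, pm0 dEq L') →
      σ (i, pm0 U L) (i, pm0 U L') := by
    intro L L' U h
    have h2 := sig_left' hσ h (rep U) (fun _ => rep U c0) (by intro u; exact ⟨c0, rfl⟩)
    simp only [pushS_dEq_rep (L := U) (f := fun _ => rep U c0)] at h2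
    exact h2
  have fwdT : ∀ α β : PM n, rnk α = 0 → rnk β = 0 → σ (i, α) (i, β) →
      σ (i, pm0 (topS α) dEq) (i, pm0 (topS β) dEq) := by
    intro α β hα hβ h
    refine killBot (topS α) (botS α) (topS β) (botS β) ?_
    rwa [pm0_eta hα, pm0_eta hβ]
  have fwdB : ∀ α β : PM n, rnk α = 0 → rnk β = 0 → σ (i, α) (i, β) →
      σ (i, pm0 dEq (botS α)) (i, pm0 dEq (botS β)) := by
    intro α β hα hβ h
    refine killTop (topS α) (botS α) (topS β) (botS β) ?_
    rwa [pm0_eta hα, pm0_eta hβ]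
  have bwd : ∀ U L U' L' : Setoid (Fin n), σ (i, pm0 U dEq) (i, pm0 U' dEq) →
      σ (i, pm0 dEq L) (i, pm0 dEq L') → σ (i, pm0 U L) (i, pm0 U' L') := by
    intro U L U' L' h1 h2
    exact hσ.1.trans (restoreBot U U' L h1) (restoreTop L L' U' h2)
  have machineTop : (∃ U U' : Setoid (Fin n),
        σ (i, pm0 U dEq) (i, pm0 U' dEq) ∧ U ≠ U') →
      ∀ U U' : Setoid (Fin n), σ (i, pm0 U dEq) (i, pm0 U' dEq) := by
    rintro ⟨U0, U0', h0, hne0⟩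
    have hex : ∃ (U U' : Setoid (Fin n)) (i0 j0 : Fin n),
        σ (i, pm0 U dEq) (i, pm0 U' dEq) ∧ U.r i0 j0 ∧ ¬ U'.r i0 j0 := by
      by_cases hss : ∃ i0 j0, U0.r i0 j0 ∧ ¬ U0'.r i0 j0
      · obtain ⟨i0, j0, h1, h2⟩ := hss
        exact ⟨U0, U0', i0, j0, h0, h1, h2⟩
      · push_neg at hss
        have hex2 : ∃ i0 j0, U0'.r i0 j0 ∧ ¬ U0.r i0 j0 := by
          by_contra hss'
          push_neg at hss'
          exact hne0 (Setoid.ext fun u v => ⟨hss u v, hss' u v⟩)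
        obtain ⟨i0, j0, h1, h2⟩ := hex2
        exact ⟨U0', U0, i0, j0, hσ.1.symm h0, h1, h2⟩
    obtain ⟨U, U', i0, j0, hUU', hij, hij'⟩ := hex
    have hsep := sig_left' hσ hUU' id (fun u => if U'.r u i0 then i0 else j0)
      (by intro u; exact ⟨if U'.r u i0 then i0 else j0, rfl⟩)
    rw [pushS_const_id (R := U') (fun p q hpq => by
      by_cases h1 : U'.r p i0
      · rw [if_pos h1, if_pos (U'.iseqv.trans (U'.iseqv.symm hpq) h1)]
      · rw [if_neg h1, if_neg fun h2 => h1 (U'.iseqv.trans hpq h2)])] at hsep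
    set T : Setoid (Fin n) := pushS U (fun u => if U'.r u i0 then i0 else j0) id with hT
    have hTij : T.r i0 j0 := Relation.EqvGen.rel _ _
      ⟨i0, j0, hij, by dsimp only; rw [if_pos (U'.iseqv.refl i0)]; rfl,
        by dsimp only; rw [if_neg fun h => hij' (U'.iseqv.symm h)]; rfl⟩
    have hne : i0 ≠ j0 := fun h => hij' (h ▸ U'.iseqv.refl i0)
    have hall : ∀ V : Setoid (Fin n), σ (i, pm0 V dEq) (i, pm0 dEq dEq) := by
      apply generate (fun A B => σ (i, pm0 A dEq) (i, pm0 B dEq))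
      · exact fun A B C h1 h2 => hσ.1.trans h1 h2
      · exact hσ.1.refl _
      · intro A a b hab
        have h2 := sig_left' hσ hsep (rep A)
          (fun p => if p = i0 then rep A a else if p = j0 then rep A b else rep A a)
          (fun u => by
            split
            · exact ⟨a, rfl⟩
            split
            · exact ⟨b, rfl⟩
            · exact ⟨a, rfl⟩)
        rwa [pushS_join A a b T i0 j0 hTij hne, pushS_dEq_rep] at h2
    intro U1 U2
    exact hσ.1.trans (hall U1) (hσ.1.symm (hall U2))
  have machineBot : (∃ L L' : Setoid (Fin n),
        σ (i, pm0 dEq L) (i, pm0 dEq L') ∧ L ≠ L') →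
      ∀ L L' : Setoid (Fin n), σ (i, pm0 dEq L) (i, pm0 dEq L') := by
    rintro ⟨U0, U0', h0, hne0⟩
    have hex : ∃ (U U' : Setoid (Fin n)) (i0 j0 : Fin n),
        σ (i, pm0 dEq U) (i, pm0 dEq U') ∧ U.r i0 j0 ∧ ¬ U'.r i0 j0 := by
      by_cases hss : ∃ i0 j0, U0.r i0 j0 ∧ ¬ U0'.r i0 j0
      · obtain ⟨i0, j0, h1, h2⟩ := hss
        exact ⟨U0, U0', i0, j0, h0, h1, h2⟩
      · push_neg at hss
        have hex2 : ∃ i0 j0, U0'.r i0 j0 ∧ ¬ U0.r i0 j0 := by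
          by_contra hss'
          push_neg at hss'
          exact hne0 (Setoid.ext fun u v => ⟨hss u v, hss' u v⟩)
        obtain ⟨i0, j0, h1, h2⟩ := hex2
        exact ⟨U0', U0, i0, j0, hσ.1.symm h0, h1, h2⟩
    obtain ⟨U, U', i0, j0, hUU', hij, hij'⟩ := hex
    have hsep := sig_right' hσ hUU' (fun u => if U'.r u i0 then i0 else j0) id
      (by intro u; exact ⟨if U'.r u i0 then i0 else j0, rfl⟩)
    rw [pushS_const_id (R := U') (fun p q hpq => by
      by_cases h1 : U'.r p i0
      · rw [if_pos h1, if_pos (U'.iseqv.trans (U'.iseqv.symm hpq) h1)]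
      · rw [if_neg h1, if_neg fun h2 => h1 (U'.iseqv.trans hpq h2)])] at hsep
    set T : Setoid (Fin n) := pushS U (fun u => if U'.r u i0 then i0 else j0) id with hT
    have hTij : T.r i0 j0 := Relation.EqvGen.rel _ _
      ⟨i0, j0, hij, by dsimp only; rw [if_pos (U'.iseqv.refl i0)]; rfl,
        by dsimp only; rw [if_neg fun h => hij' (U'.iseqv.symm h)]; rfl⟩
    have hne : i0 ≠ j0 := fun h => hij' (h ▸ U'.iseqv.refl i0)
    have hall : ∀ V : Setoid (Fin n), σ (i, pm0 dEq V) (i, pm0 dEq dEq) := by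
      apply generate (fun A B => σ (i, pm0 dEq A) (i, pm0 dEq B))
      · exact fun A B C h1 h2 => hσ.1.trans h1 h2
      · exact hσ.1.refl _
      · intro A a b hab
        have h2 := sig_right' hσ hsep
          (fun p => if p = i0 then rep A a else if p = j0 then rep A b else rep A a)
          (rep A)
          (fun u => by
            split
            · exact ⟨a, rfl⟩
            split
            · exact ⟨b, rfl⟩
            · exact ⟨a, rfl⟩)
        rwa [pushS_join A a b T i0 j0 hTij hne, pushS_dEq_rep] at h2
    intro U1 U2
    exact hσ.1.trans (hall U1) (hσ.1.symm (hall U2))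
  by_cases hPT : ∃ U U' : Setoid (Fin n), σ (i, pm0 U dEq) (i, pm0 U' dEq) ∧ U ≠ U' <;>
    by_cases hPB : ∃ L L' : Setoid (Fin n), σ (i, pm0 dEq L) (i, pm0 dEq L') ∧ L ≠ L'
  · -- full relation
    refine Or.inr (Or.inr (Or.inr ?_))
    funext α β
    apply propext
    constructor
    · rintro ⟨hα, hβ, _⟩
      exact ⟨hα, hβ⟩
    · rintro ⟨hα, hβ⟩
      refine ⟨hα, hβ, ?_⟩
      have h1 := bwd (topS α) (botS α) (topS β) (botS β)
        (machineTop hPT _ _) (machineBot hPB _ _)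
      rwa [pm0_eta hα, pm0_eta hβ] at h1
  · -- greenL : bottoms equal
    refine Or.inr (Or.inl ?_)
    funext α β
    apply propext
    push_neg at hPB
    constructor
    · rintro ⟨hα, hβ, h⟩
      refine ⟨hα, hβ, (greenL_iff hn hα hβ).mpr ?_⟩
      exact hPB _ _ (fwdB α β hα hβ h)
    · rintro ⟨hα, hβ, h⟩
      have hb : botS α = botS β := (greenL_iff hn hα hβ).mp h
      refine ⟨hα, hβ, ?_⟩
      have h1 := bwd (topS α) (botS α) (topS β) (botS β)
        (machineTop hPT _ _) (hb ▸ hσ.1.refl (i, pm0 dEq (botS α)))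
      rwa [pm0_eta hα, pm0_eta hβ] at h1
  · -- greenR : tops equal
    refine Or.inr (Or.inr (Or.inl ?_))
    funext α β
    apply propext
    push_neg at hPT
    constructor
    · rintro ⟨hα, hβ, h⟩
      refine ⟨hα, hβ, (greenR_iff hn hα hβ).mpr ?_⟩
      exact hPT _ _ (fwdT α β hα hβ h)
    · rintro ⟨hα, hβ, h⟩
      have ht : topS α = topS β := (greenR_iff hn hα hβ).mp h
      refine ⟨hα, hβ, ?_⟩
      have h1 := bwd (topS α) (botS α) (topS β) (botS β)
        (ht ▸ hσ.1.refl (i, pm0 (topS α) dEq)) (machineBot hPB _ _)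
      rwa [pm0_eta hα, pm0_eta hβ] at h1
  · -- equality
    refine Or.inl ?_
    funext α β
    apply propext
    push_neg at hPT
    push_neg at hPB
    constructor
    · rintro ⟨hα, hβ, h⟩
      refine ⟨hα, hβ, ?_⟩
      have ht : topS α = topS β := hPT _ _ (fwdT α β hα hβ h)
      have hb : botS α = botS β := hPB _ _ (fwdB α β hα hβ h)
      rw [← pm0_eta hα, ← pm0_eta hβ, ht, hb]
    · rintro ⟨hα, hβ, rfl⟩
      exact ⟨hα, hβ, hσ.1.refl _⟩
end TPM
end
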